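/- arXiv:1103.5069 — 7 statements merged into one kernel-verified Lean document; each statement's English description precedes it below -/
import Mathlib

section
/- Let ω be a Dini function (a bounded continuous increasing function on [0,∞) with ω(0)=0 and ∫₀¹ ω(s)/s ds < ∞), and let a ∈ (0,1), b > 1 be constants. Then the function ω̃(t) := Σ_{k=0}^∞ aᵏ ω(bᵏ t) is also a Dini function; in particular the series converges for all t ≥ 0, ω̃ is bounded, continuous, increasing, ω̃(0)=0, and ∫₀¹ ω̃(s)/s ds < ∞. -/
/-! Every term satisfies `|aᵏ ω(bᵏ t)| ≤ M aᵏ`, so the series converges uniformly on `[0, ∞)`,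
which gives continuity, monotonicity and the bound `M / (1 - a)`. For the Dini condition, the
substitution `u = bᵏ s` gives
`∫₀¹ |ω(bᵏ s)| / s ds = ∫₀^{bᵏ} |ω(u)| / u du ≤ ∫₀¹ |ω(u)| / u du + M k log b`,
and `∑ aᵏ (C + M k log b) < ∞`, so the series of integrands may be integrated term by term. -/

open MeasureTheory Set Filter

theorem integrable_tsum_of_summable_integral_norm {α E ι : Type*} [MeasurableSpace α]
    {μ : Measure α} [NormedAddCommGroup E] [CompleteSpace E] [Countable ι] {F : ι → α → E}
    (hF_int : ∀ i, Integrable (F i) μ) (hF_sum : Summable fun i ↦ ∫ a, ‖F i a‖ ∂μ) :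
    Integrable (fun a ↦ ∑' i, F i a) μ := by
  have hF_enorm (i : ι) : AEMeasurable (fun a ↦ ‖F i a‖ₑ) μ := (hF_int i).1.enorm
  have hlint : ∫⁻ a, ∑' i, ‖F i a‖ₑ ∂μ ≠ ⊤ := by
    simp_rw [lintegral_tsum hF_enorm, ← ofReal_integral_norm_eq_lintegral_enorm (hF_int _),
      ← ENNReal.ofReal_tsum_of_nonneg (fun i ↦ integral_nonneg fun a ↦ norm_nonneg _) hF_sum]
    exact ENNReal.ofReal_ne_top
  have hsum : ∀ᵐ a ∂μ, Summable fun i ↦ F i a := by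
    filter_upwards [ae_lt_top' (AEMeasurable.tsum hF_enorm) hlint] with a ha
    exact (tsum_enorm_ne_top_iff_summable_norm.1 ha.ne).of_norm
  refine ⟨aestronglyMeasurable_of_tendsto_ae atTop
    (fun s ↦ Finset.aestronglyMeasurable_fun_sum s fun i _ ↦ (hF_int i).1)
    (hsum.mono fun a ha ↦ ha.hasSum), ?_⟩
  exact (lintegral_mono fun a ↦ enorm_tsum_le_tsum_enorm).trans_lt hlint.lt_top

theorem summable_pow_mul_add_mul {a : ℝ} (ha : 0 ≤ a) (ha1 : a < 1) (C D : ℝ) :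
    Summable fun k : ℕ ↦ a ^ k * (C + D * k) := by
  have hk : Summable fun k : ℕ ↦ (k : ℝ) * a ^ k := by
    simpa using summable_pow_mul_geometric_of_norm_lt_one 1 (by rwa [Real.norm_of_nonneg ha])
  exact (((summable_geometric_of_lt_one ha ha1).mul_left C).add (hk.mul_left D)).congr
    fun k ↦ by ring

section Rescaling

variable {c : ℝ}

theorem integrableOn_Ioc_comp_mul_left {g : ℝ → ℝ} (hc : 0 < c) (hg : IntegrableOn g (Ioc 0 c)) :
    IntegrableOn (fun s ↦ g (c * s)) (Ioc 0 1) := by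
  have h := ((intervalIntegrable_iff_integrableOn_Ioc_of_le hc.le).2 hg).comp_mul_left (c := c)
  rw [zero_div, div_self hc.ne'] at h
  exact (intervalIntegrable_iff_integrableOn_Ioc_of_le zero_le_one).1 h

theorem mul_setIntegral_Ioc_comp_mul_left (g : ℝ → ℝ) (hc : 0 ≤ c) :
    c * ∫ s in Ioc 0 1, g (c * s) = ∫ u in Ioc 0 c, g u := by
  rw [← intervalIntegral.integral_of_le zero_le_one, intervalIntegral.mul_integral_comp_mul_left,
    mul_zero, mul_one, intervalIntegral.integral_of_le hc]

end Rescaling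

-- Also at `s = 0`, where both sides vanish by the convention `x / 0 = 0`.
theorem comp_mul_div_eq (ω : ℝ → ℝ) {c : ℝ} (hc : c ≠ 0) (s : ℝ) :
    ω (c * s) / s = c * (ω (c * s) / (c * s)) := by
  rw [← mul_div_assoc, mul_div_mul_left _ _ hc]

section DivSelf

variable {ω : ℝ → ℝ} {c M : ℝ}

theorem integrableOn_div_Ioc_of_continuousOn (hc : 1 ≤ c)
    (hω_int : IntegrableOn (fun u ↦ ω u / u) (Ioc 0 1)) (hω_cont : ContinuousOn ω (Icc 1 c)) :
    IntegrableOn (fun u ↦ ω u / u) (Ioc 0 c) := by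
  have h_tail : IntegrableOn (fun u ↦ ω u / u) (Icc 1 c) :=
    (hω_cont.div continuousOn_id fun u hu ↦ (zero_lt_one.trans_le hu.1).ne').integrableOn_Icc
  rw [← Ioc_union_Ioc_eq_Ioc zero_le_one hc]
  exact hω_int.union (h_tail.mono_set Ioc_subset_Icc_self)

theorem setIntegral_norm_div_Ioc_le (hc : 1 ≤ c)
    (hω_int : IntegrableOn (fun u ↦ ω u / u) (Ioc 0 1)) (hω_cont : ContinuousOn ω (Icc 1 c))
    (hM : ∀ u ∈ Icc 1 c, ‖ω u‖ ≤ M) :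
    ∫ u in Ioc 0 c, ‖ω u / u‖ ≤ (∫ u in Ioc 0 1, ‖ω u / u‖) + M * Real.log c := by
  have h_int : IntegrableOn (fun u ↦ ‖ω u / u‖) (Ioc 0 c) :=
    (integrableOn_div_Ioc_of_continuousOn hc hω_int hω_cont).norm
  have h_inv : IntegrableOn (fun u ↦ M * u⁻¹) (Ioc 1 c) :=
    ((continuousOn_inv₀.mono fun u hu ↦ (zero_lt_one.trans_le hu.1).ne').const_smul
      M).integrableOn_Icc.mono_set Ioc_subset_Icc_self
  have h_tail : ∫ u in Ioc 1 c, ‖ω u / u‖ ≤ ∫ u in Ioc 1 c, M * u⁻¹ := by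
    refine setIntegral_mono_on (h_int.mono_set (Ioc_subset_Ioc_left zero_le_one)) h_inv
      measurableSet_Ioc fun u hu ↦ ?_
    have hu0 : 0 < u := zero_lt_one.trans hu.1
    rw [norm_div, Real.norm_of_nonneg hu0.le, ← div_eq_mul_inv]
    exact div_le_div_of_nonneg_right (hM u (Ioc_subset_Icc_self hu)) hu0.le
  have h_log : ∫ u in Ioc 1 c, M * u⁻¹ = M * Real.log c := by
    rw [integral_const_mul, ← intervalIntegral.integral_of_le hc,
      integral_inv_of_pos zero_lt_one (zero_lt_one.trans_le hc), div_one]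
  rw [← Ioc_union_Ioc_eq_Ioc zero_le_one hc, setIntegral_union (Ioc_disjoint_Ioc_of_le le_rfl)
    measurableSet_Ioc (h_int.mono_set (Ioc_subset_Ioc_right hc))
    (h_int.mono_set (Ioc_subset_Ioc_left zero_le_one))]
  linarith

theorem integrableOn_comp_mul_div (hc : 1 ≤ c)
    (hω_int : IntegrableOn (fun u ↦ ω u / u) (Ioc 0 1)) (hω_cont : ContinuousOn ω (Icc 1 c)) :
    IntegrableOn (fun s ↦ ω (c * s) / s) (Ioc 0 1) := by
  have hc0 : 0 < c := zero_lt_one.trans_le hc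
  simp_rw [comp_mul_div_eq ω hc0.ne']
  exact (integrableOn_Ioc_comp_mul_left hc0
    (integrableOn_div_Ioc_of_continuousOn hc hω_int hω_cont)).const_mul c

theorem setIntegral_norm_comp_mul_div_le (hc : 1 ≤ c)
    (hω_int : IntegrableOn (fun u ↦ ω u / u) (Ioc 0 1)) (hω_cont : ContinuousOn ω (Icc 1 c))
    (hM : ∀ u ∈ Icc 1 c, ‖ω u‖ ≤ M) :
    ∫ s in Ioc 0 1, ‖ω (c * s) / s‖ ≤ (∫ u in Ioc 0 1, ‖ω u / u‖) + M * Real.log c := by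
  have hc0 : 0 < c := zero_lt_one.trans_le hc
  simp_rw [comp_mul_div_eq ω hc0.ne', norm_mul, Real.norm_of_nonneg hc0.le, integral_const_mul,
    mul_setIntegral_Ioc_comp_mul_left (fun u ↦ ‖ω u / u‖) hc0.le]
  exact setIntegral_norm_div_Ioc_le hc hω_int hω_cont hM

end DivSelf

noncomputable def diniSeries (ω : ℝ → ℝ) (a b t : ℝ) : ℝ :=
  ∑' k : ℕ, a ^ k * ω (b ^ k * t)

section DiniSeries

variable {ω : ℝ → ℝ} {a b M : ℝ}

theorem norm_diniSeries_term_le (ha : 0 ≤ a) (hb : 0 ≤ b)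
    (hM : ∀ t ∈ Ici (0 : ℝ), |ω t| ≤ M) (k : ℕ) {t : ℝ} (ht : 0 ≤ t) :
    ‖a ^ k * ω (b ^ k * t)‖ ≤ M * a ^ k := by
  rw [norm_mul, norm_pow, Real.norm_of_nonneg ha, mul_comm]
  exact mul_le_mul_of_nonneg_right (hM _ (mul_nonneg (pow_nonneg hb k) ht)) (pow_nonneg ha k)

theorem summable_diniSeries_term (ha : 0 ≤ a) (ha1 : a < 1) (hb : 0 ≤ b)
    (hM : ∀ t ∈ Ici (0 : ℝ), |ω t| ≤ M) {t : ℝ} (ht : 0 ≤ t) :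
    Summable fun k : ℕ ↦ a ^ k * ω (b ^ k * t) :=
  .of_norm_bounded ((summable_geometric_of_lt_one ha ha1).mul_left M)
    fun k ↦ norm_diniSeries_term_le ha hb hM k ht

theorem continuousOn_diniSeries (ha : 0 ≤ a) (ha1 : a < 1) (hb : 0 ≤ b)
    (hM : ∀ t ∈ Ici (0 : ℝ), |ω t| ≤ M) (hω : ContinuousOn ω (Ici 0)) :
    ContinuousOn (diniSeries ω a b) (Ici 0) :=
  continuousOn_tsum (fun k ↦ continuousOn_const.mul (hω.comp (continuous_const_mul _).continuousOn
      fun _ ht ↦ mul_nonneg (pow_nonneg hb k) ht))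
    ((summable_geometric_of_lt_one ha ha1).mul_left M)
    fun k _ ht ↦ norm_diniSeries_term_le ha hb hM k ht

theorem monotoneOn_diniSeries (ha : 0 ≤ a) (ha1 : a < 1) (hb : 0 ≤ b)
    (hM : ∀ t ∈ Ici (0 : ℝ), |ω t| ≤ M) (hω : MonotoneOn ω (Ici 0)) :
    MonotoneOn (diniSeries ω a b) (Ici 0) := fun _ hx _ hy hxy ↦
  Summable.tsum_le_tsum (fun k ↦ mul_le_mul_of_nonneg_left
      (hω (mul_nonneg (pow_nonneg hb k) hx) (mul_nonneg (pow_nonneg hb k) hy)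
        (mul_le_mul_of_nonneg_left hxy (pow_nonneg hb k))) (pow_nonneg ha k))
    (summable_diniSeries_term ha ha1 hb hM hx) (summable_diniSeries_term ha ha1 hb hM hy)

theorem abs_diniSeries_le (ha : 0 ≤ a) (ha1 : a < 1) (hb : 0 ≤ b)
    (hM : ∀ t ∈ Ici (0 : ℝ), |ω t| ≤ M) {t : ℝ} (ht : 0 ≤ t) :
    |diniSeries ω a b t| ≤ M * (1 - a)⁻¹ := by
  rw [← Real.norm_eq_abs, ← tsum_geometric_of_lt_one ha ha1, ← tsum_mul_left]
  exact tsum_of_norm_bounded ((summable_geometric_of_lt_one ha ha1).mul_left M).hasSum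
    fun k ↦ norm_diniSeries_term_le ha hb hM k ht

theorem integrableOn_diniSeries_div (ha : 0 ≤ a) (ha1 : a < 1) (hb : 1 ≤ b)
    (hM : ∀ t ∈ Ici (0 : ℝ), |ω t| ≤ M) (hω_cont : ContinuousOn ω (Ici 0))
    (hω_int : IntegrableOn (fun s ↦ ω s / s) (Ioc 0 1)) :
    IntegrableOn (fun s ↦ diniSeries ω a b s / s) (Ioc 0 1) := by
  set F : ℕ → ℝ → ℝ := fun k s ↦ a ^ k * (ω (b ^ k * s) / s)
  have hbk (k : ℕ) : 1 ≤ b ^ k := one_le_pow₀ hb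
  have hω_cont' (k : ℕ) : ContinuousOn ω (Icc 1 (b ^ k)) :=
    hω_cont.mono fun u hu ↦ zero_le_one.trans hu.1
  have hM' (k : ℕ) : ∀ u ∈ Icc 1 (b ^ k), ‖ω u‖ ≤ M := fun u hu ↦
    hM u (zero_le_one.trans hu.1)
  have hF_int (k : ℕ) : IntegrableOn (F k) (Ioc 0 1) :=
    (integrableOn_comp_mul_div (hbk k) hω_int (hω_cont' k)).const_mul _
  have hF_le (k : ℕ) : ∫ s in Ioc 0 1, ‖F k s‖ ≤
      a ^ k * ((∫ u in Ioc 0 1, ‖ω u / u‖) + M * Real.log b * k) := by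
    have h := setIntegral_norm_comp_mul_div_le (hbk k) hω_int (hω_cont' k) (hM' k)
    rw [Real.log_pow, ← mul_assoc, mul_right_comm M] at h
    simp_rw [F, norm_mul, norm_pow, Real.norm_of_nonneg ha, integral_const_mul]
    exact mul_le_mul_of_nonneg_left h (pow_nonneg ha k)
  have hF_sum : Summable fun k ↦ ∫ s in Ioc 0 1, ‖F k s‖ :=
    .of_nonneg_of_le (fun _ ↦ integral_nonneg fun _ ↦ norm_nonneg _) hF_le
      (summable_pow_mul_add_mul ha ha1 _ _)
  have h_eq : (fun s ↦ diniSeries ω a b s / s) = fun s ↦ ∑' k, F k s := by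
    ext s
    simp only [diniSeries, F, ← tsum_div_const, mul_div_assoc]
  rw [h_eq]
  exact integrable_tsum_of_summable_integral_norm hF_int hF_sum

end DiniSeries

theorem dini_series_general (ω : ℝ → ℝ) (a b : ℝ) (ha : a ∈ Set.Ioo (0:ℝ) 1) (hb : 1 < b)
    (hω_cont : ContinuousOn ω (Set.Ici 0))
    (hω_mono : MonotoneOn ω (Set.Ici 0))
    (hω_bdd : ∃ M : ℝ, ∀ t ∈ Set.Ici (0:ℝ), |ω t| ≤ M)
    (hω0 : ω 0 = 0)
    (hω_int : IntegrableOn (fun s => ω s / s) (Set.Ioc (0:ℝ) 1)) :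
    (∀ t ∈ Set.Ici (0:ℝ), Summable (fun k : ℕ => a ^ k * ω (b ^ k * t))) ∧
    ContinuousOn (fun t => ∑' k : ℕ, a ^ k * ω (b ^ k * t)) (Set.Ici 0) ∧
    MonotoneOn (fun t => ∑' k : ℕ, a ^ k * ω (b ^ k * t)) (Set.Ici 0) ∧
    (∃ M : ℝ, ∀ t ∈ Set.Ici (0:ℝ), |∑' k : ℕ, a ^ k * ω (b ^ k * t)| ≤ M) ∧
    (∑' k : ℕ, a ^ k * ω (b ^ k * (0:ℝ))) = 0 ∧
    IntegrableOn (fun s => (∑' k : ℕ, a ^ k * ω (b ^ k * s)) / s) (Set.Ioc (0:ℝ) 1) := by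
  obtain ⟨ha0, ha1⟩ := ha
  obtain ⟨M, hM⟩ := hω_bdd
  have hb0 : 0 ≤ b := zero_le_one.trans hb.le
  exact ⟨fun t ht ↦ summable_diniSeries_term ha0.le ha1 hb0 hM ht,
    continuousOn_diniSeries ha0.le ha1 hb0 hM hω_cont,
    monotoneOn_diniSeries ha0.le ha1 hb0 hM hω_mono,
    ⟨_, fun t ht ↦ abs_diniSeries_le ha0.le ha1 hb0 hM ht⟩,
    by simp [hω0],
    integrableOn_diniSeries_div ha0.le ha1 hb.le hM hω_cont hω_int⟩

/-- If `ω` is a Dini function (bounded continuous increasing on `[0,∞)`, `ω 0 = 0`,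
`∫₀¹ ω s / s ds < ∞`) and `a ∈ (0,1)`, `b > 1`, then `ω̃ t = ∑ aᵏ ω (bᵏ t)` is also a
Dini function. -/
theorem dini_series (ω : ℝ → ℝ) (a b : ℝ) (ha : a ∈ Set.Ioo (0:ℝ) 1) (hb : 1 < b)
    (hω_cont : ContinuousOn ω (Set.Ici 0))
    (hω_mono : MonotoneOn ω (Set.Ici 0))
    (hω_nonneg : ∀ t ∈ Set.Ici (0:ℝ), 0 ≤ ω t)
    (hω_bdd : ∃ M : ℝ, ∀ t ∈ Set.Ici (0:ℝ), |ω t| ≤ M)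
    (hω0 : ω 0 = 0)
    (hω_int : IntegrableOn (fun s => ω s / s) (Set.Ioc (0:ℝ) 1)) :
    (∀ t ∈ Set.Ici (0:ℝ), Summable (fun k : ℕ => a ^ k * ω (b ^ k * t))) ∧
    ContinuousOn (fun t => ∑' k : ℕ, a ^ k * ω (b ^ k * t)) (Set.Ici 0) ∧
    MonotoneOn (fun t => ∑' k : ℕ, a ^ k * ω (b ^ k * t)) (Set.Ici 0) ∧
    (∃ M : ℝ, ∀ t ∈ Set.Ici (0:ℝ), |∑' k : ℕ, a ^ k * ω (b ^ k * t)| ≤ M) ∧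
    (∑' k : ℕ, a ^ k * ω (b ^ k * (0:ℝ))) = 0 ∧
    IntegrableOn (fun s => (∑' k : ℕ, a ^ k * ω (b ^ k * s)) / s) (Set.Ioc (0:ℝ) 1) :=
  dini_series_general ω a b ha hb hω_cont hω_mono hω_bdd hω0 hω_int
end

section
/- Let α ∈ (0,1), β ∈ (0,1) with α + β < 1, K > 0, and let f : ℝ → ℝ be bounded. For h > 0 define f_{β,h}(x) = h^{−β}(f(x+h) − f(x)). Suppose [f_{β,h}]_{C^α} ≤ K for every h > 0. Then f ∈ C^{α+β} and [f]_{C^{α+β}} ≤ N K, where N depends only on α+β. -/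
open Filter Topology

/-! Evaluating the hypothesis at the points `z + h` and `z` bounds the second difference
`f (z + 2h) - 2 f (z + h) + f z` by `K h^s` with `s = α + β`. Since
`2 (f (z + h) - f z) = (f (z + 2h) - f z) - (second difference)`, the oscillation
`ω(h) = sup_z |f (z + h) - f z|` satisfies `ω(h) ≤ ω(2h)/2 + K h^s/2`; iterating `n` times from
the bound `ω ≤ 2 sup |f|` gives `ω(h) ≤ 2 sup |f| / 2^n + K h^s / (2 - 2^s)`, and `n → ∞`
finishes the proof, because `2^s < 2` for `s < 1`. -/

lemma abs_second_diff_le_of_diffQuot_holder {f : ℝ → ℝ} {α β K h : ℝ} (hh : 0 < h)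
    (hf : ∀ x y, |h ^ (-β) * (f (x + h) - f x) - h ^ (-β) * (f (y + h) - f y)| ≤ K * |x - y| ^ α)
    (z : ℝ) : |f (z + 2 * h) - 2 * f (z + h) + f z| ≤ K * h ^ (α + β) := by
  have key := hf (z + h) z
  rw [add_sub_cancel_left, abs_of_pos hh, ← mul_sub, abs_mul,
    abs_of_pos (Real.rpow_pos_of_pos hh _)] at key
  have hsecond : f (z + h + h) - f (z + h) - (f (z + h) - f z)
      = f (z + 2 * h) - 2 * f (z + h) + f z := by ring_nf
  calc |f (z + 2 * h) - 2 * f (z + h) + f z|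
      = h ^ β * (h ^ (-β) * |f (z + h + h) - f (z + h) - (f (z + h) - f z)|) := by
        rw [← mul_assoc, ← Real.rpow_add hh, add_neg_cancel, Real.rpow_zero, one_mul, hsecond]
    _ ≤ h ^ β * (K * h ^ α) := by gcongr
    _ = K * h ^ (α + β) := by rw [Real.rpow_add hh]; ring

section SecondDifference

variable {f : ℝ → ℝ} {s A B : ℝ}

lemma abs_sub_le_div_two_pow_add_of_abs_second_diff_le (hs : s < 1) (hA : 0 ≤ A)
    (hB : ∀ z h, 0 < h → |f (z + h) - f z| ≤ B)
    (hf : ∀ z h, 0 < h → |f (z + 2 * h) - 2 * f (z + h) + f z| ≤ A * h ^ s) (n : ℕ) :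
    ∀ z h, 0 < h → |f (z + h) - f z| ≤ B / 2 ^ n + (2 - 2 ^ s)⁻¹ * A * h ^ s := by
  have hden : 0 < 2 - (2 : ℝ) ^ s := sub_pos.2 (Real.rpow_lt_self_of_one_lt one_lt_two hs)
  induction n with
  | zero =>
    intro z h hh
    have : 0 ≤ (2 - 2 ^ s)⁻¹ * A * h ^ s := by positivity
    simpa using (hB z h hh).trans (le_add_of_nonneg_right this)
  | succ n ih =>
    intro z h hh
    have hdouble := ih z (2 * h) (by positivity)
    rw [Real.mul_rpow zero_le_two hh.le] at hdouble
    have htwice : 2 * |f (z + h) - f z|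
        ≤ |f (z + 2 * h) - f z| + |f (z + 2 * h) - 2 * f (z + h) + f z| := by
      have hsplit : 2 * (f (z + h) - f z)
          = (f (z + 2 * h) - f z) - (f (z + 2 * h) - 2 * f (z + h) + f z) := by ring
      rw [← abs_two, ← abs_mul, abs_two, hsplit]
      exact abs_sub _ _
    -- the constant `(2 - 2^s)⁻¹` is the fixed point of `c ↦ (c 2^s + 1) / 2`
    have hfix : (2 - 2 ^ s)⁻¹ * 2 ^ s + 1 = 2 * (2 - (2 : ℝ) ^ s)⁻¹ := by
      field_simp
      ring
    have hstep : (2 - 2 ^ s)⁻¹ * A * (2 ^ s * h ^ s) + A * h ^ s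
        = 2 * ((2 - 2 ^ s)⁻¹ * A * h ^ s) := by
      linear_combination A * h ^ s * hfix
    rw [pow_succ, ← div_div]
    linarith [hf z h hh]

theorem abs_sub_le_mul_abs_sub_rpow_of_abs_second_diff_le (hs : s < 1) (hA : 0 ≤ A)
    (hB : ∀ z h, 0 < h → |f (z + h) - f z| ≤ B)
    (hf : ∀ z h, 0 < h → |f (z + 2 * h) - 2 * f (z + h) + f z| ≤ A * h ^ s) (x y : ℝ) :
    |f x - f y| ≤ (2 - 2 ^ s)⁻¹ * A * |x - y| ^ s := by
  have hden : 0 < 2 - (2 : ℝ) ^ s := sub_pos.2 (Real.rpow_lt_self_of_one_lt one_lt_two hs)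
  wlog hxy : y ≤ x generalizing x y
  · rw [abs_sub_comm, abs_sub_comm x]
    exact this y x (le_of_not_ge hxy)
  rcases hxy.eq_or_lt with rfl | hlt
  · simp only [sub_self, abs_zero]
    positivity
  have hlim : Tendsto (fun n : ℕ => B / 2 ^ n + (2 - 2 ^ s)⁻¹ * A * (x - y) ^ s) atTop
      (𝓝 (0 + (2 - 2 ^ s)⁻¹ * A * (x - y) ^ s)) :=
    (tendsto_const_nhds.div_atTop (tendsto_pow_atTop_atTop_of_one_lt one_lt_two)).add
      tendsto_const_nhds
  rw [zero_add] at hlim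
  rw [abs_of_pos (sub_pos.2 hlt)]
  refine ge_of_tendsto' hlim fun n => ?_
  simpa using abs_sub_le_div_two_pow_add_of_abs_second_diff_le hs hA hB hf n y (x - y)
    (sub_pos.2 hlt)

end SecondDifference

/-- If `f : ℝ → ℝ` is bounded, `α, β ∈ (0,1)` with `α + β = s < 1`, and the difference
quotients `f_{β,h}(x) = h^{-β} (f (x+h) - f x)` satisfy `[f_{β,h}]_{C^α} ≤ K` for every
`h > 0`, then `f ∈ C^{α+β}` with `[f]_{C^{α+β}} ≤ N K`, where `N = N(α+β)`. -/
theorem holder_from_difference_quotients (s : ℝ) (hs : s ∈ Set.Ioo (0:ℝ) 1) :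
    ∃ N : ℝ, 0 < N ∧ ∀ (α β : ℝ), α ∈ Set.Ioo (0:ℝ) 1 → β ∈ Set.Ioo (0:ℝ) 1 →
      α + β = s → ∀ (f : ℝ → ℝ) (K : ℝ), 0 < K →
      (∃ M : ℝ, ∀ x, |f x| ≤ M) →
      (∀ h : ℝ, 0 < h → ∀ x y : ℝ,
        |h ^ (-β) * (f (x + h) - f x) - h ^ (-β) * (f (y + h) - f y)| ≤ K * |x - y| ^ α) →
      ∀ x y : ℝ, |f x - f y| ≤ N * K * |x - y| ^ s := by
  refine ⟨(2 - 2 ^ s)⁻¹, inv_pos.2 (sub_pos.2 (Real.rpow_lt_self_of_one_lt one_lt_two hs.2)), ?_⟩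
  rintro α β - - rfl f K hK ⟨M, hM⟩ hdq
  have hosc : ∀ z h, 0 < h → |f (z + h) - f z| ≤ M + M := fun z h _ =>
    (abs_sub _ _).trans (add_le_add (hM _) (hM _))
  exact abs_sub_le_mul_abs_sub_rpow_of_abs_second_diff_le hs.2 hK.le hosc
    fun z h hh => abs_second_diff_le_of_diffQuot_holder hh (hdq h hh) z
end

section
/- Let α ∈ (0,1), β = 1 − α, K > 0, γ ∈ (0,1), and let f : ℝ → ℝ be bounded with [f]_{C^γ} < ∞. For h > 0 define f_{β,h}(x) = h^{−β}(f(x+h) − f(x)), and suppose [f_{β,h}]_{C^α} ≤ K for every h > 0. Then for all x, y ∈ ℝ with 0 < |y| we have |f(x+y) − f(x)| ≤ N |y log|y|| K + N |y| [f]_{C^γ}, where N depends only on γ. -/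
/-!
Taking `h = s`, `x = z + s`, `y = z` in the hypothesis and using `α + β = 1` bounds the second
differences: `|f (z + 2s) - 2 f (z + s) + f z| ≤ K s`. Since
`f (z + s) - f z = ((f (z + 2s) - f z) - (f (z + 2s) - 2 f (z + s) + f z)) / 2`, iterating `n` times
gives `|f (z + s) - f z| ≤ |f (z + 2ⁿ s) - f z| / 2ⁿ + n K s / 2`. Choosing `n ≈ log₂ (1 / s)`, so
that `2ⁿ s ≥ 1`, the Hölder bound turns the first term into `[f]_γ s`, and the second is
`O(s |log s| K)`. For `s ≥ 1/2` the Hölder bound alone suffices.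
-/

open Real Set

lemma abs_sub_le_of_forall_pos_increment {f : ℝ → ℝ} {B : ℝ → ℝ}
    (hf : ∀ z t, 0 < t → |f (z + t) - f z| ≤ B t) (x : ℝ) {y : ℝ} (hy : y ≠ 0) :
    |f (x + y) - f x| ≤ B |y| := by
  rcases hy.lt_or_gt with hneg | hpos
  · have h := hf (x + y) (-y) (neg_pos.mpr hneg)
    rwa [add_neg_cancel_right, abs_sub_comm, ← abs_of_neg hneg] at h
  · rw [abs_of_pos hpos]
    exact hf x y hpos

lemma abs_second_diff_le_of_holder_diff_quotient {f : ℝ → ℝ} {α K s : ℝ} (hs : 0 < s)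
    (hq : ∀ x y : ℝ,
      |s ^ (-(1 - α)) * (f (x + s) - f x) - s ^ (-(1 - α)) * (f (y + s) - f y)| ≤ K * |x - y| ^ α)
    (z : ℝ) :
    |f (z + 2 * s) - 2 * f (z + s) + f z| ≤ K * s := by
  have h := hq (z + s) z
  have hsα : 0 < s ^ α := rpow_pos_of_pos hs α
  rw [← mul_sub, abs_mul, add_sub_cancel_left, abs_of_pos hs, neg_sub, rpow_sub_one hs.ne',
    abs_of_pos (div_pos hsα hs), show z + s + s = z + 2 * s by ring, div_mul_eq_mul_div,
    div_le_iff₀ hs, mul_comm K, mul_assoc, mul_le_mul_iff_right₀ hsα] at h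
  rwa [show f (z + 2 * s) - 2 * f (z + s) + f z = f (z + 2 * s) - f (z + s) - (f (z + s) - f z)
    by ring]

lemma abs_sub_le_dyadic_of_second_diff {f : ℝ → ℝ} {K : ℝ}
    (hf : ∀ s, 0 < s → ∀ z, |f (z + 2 * s) - 2 * f (z + s) + f z| ≤ K * s)
    (n : ℕ) {s : ℝ} (hs : 0 < s) (z : ℝ) :
    |f (z + s) - f z| ≤ |f (z + 2 ^ n * s) - f z| / 2 ^ n + n * K * s / 2 := by
  induction n generalizing s with
  | zero => simp
  | succ n ih =>
    have hhalf : |f (z + s) - f z| ≤ (|f (z + 2 * s) - f z| + K * s) / 2 := by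
      have h := abs_sub (f (z + 2 * s) - f z) (f (z + 2 * s) - 2 * f (z + s) + f z)
      rw [show f (z + 2 * s) - f z - (f (z + 2 * s) - 2 * f (z + s) + f z)
        = 2 * (f (z + s) - f z) by ring, abs_mul, abs_two] at h
      linarith [hf s hs z]
    have h2s := ih (by positivity : 0 < 2 * s)
    rw [← mul_assoc, ← pow_succ] at h2s
    calc |f (z + s) - f z| ≤ (|f (z + 2 * s) - f z| + K * s) / 2 := hhalf
      _ ≤ (|f (z + 2 ^ (n + 1) * s) - f z| / 2 ^ n + n * K * (2 * s) / 2 + K * s) / 2 := by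
          gcongr
      _ = |f (z + 2 ^ (n + 1) * s) - f z| / 2 ^ (n + 1) + ↑(n + 1) * K * s / 2 := by
          push_cast
          ring

lemma exists_one_le_two_pow_mul_and_le_four_mul_abs_log {t : ℝ} (ht : 0 < t) (ht' : t < 1 / 2) :
    ∃ n : ℕ, 1 ≤ 2 ^ n * t ∧ (n : ℝ) ≤ 4 * |log t| := by
  have htinv : 2 < t⁻¹ := by
    rw [lt_inv_comm₀ two_pos ht]; linarith
  obtain ⟨m, hm_le, hm_lt⟩ := exists_nat_pow_near (by linarith : (1 : ℝ) ≤ t⁻¹) one_lt_two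
  have hm : 1 ≤ m := by
    by_contra! h
    interval_cases m
    norm_num at hm_lt
    linarith
  refine ⟨m + 1, ?_, ?_⟩
  · rw [inv_lt_iff_one_lt_mul₀ ht] at hm_lt
    exact hm_lt.le
  · have hlog : m * log 2 ≤ |log t| := by
      rw [← log_pow, abs_of_neg (log_neg ht (by linarith)), ← log_inv]
      exact log_le_log (by positivity) hm_le
    have hm' : (1 : ℝ) ≤ m := by exact_mod_cast hm
    have := log_two_gt_d9
    push_cast
    nlinarith

lemma rpow_le_two_mul_of_one_half_le {γ t : ℝ} (hγ : γ ∈ Icc (0 : ℝ) 1) (ht : 1 / 2 ≤ t) :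
    t ^ γ ≤ 2 * t := by
  rcases le_or_gt 1 t with h | h
  · linarith [rpow_le_self_of_one_le h hγ.2]
  · linarith [rpow_le_one (by linarith) h.le hγ.1]

lemma abs_sub_le_of_holder_of_second_diff {f : ℝ → ℝ} {γ K C : ℝ} (hγ : γ ∈ Icc (0 : ℝ) 1)
    (hK : 0 ≤ K) (hHol : ∀ x y, |f x - f y| ≤ C * |x - y| ^ γ)
    (hf : ∀ s, 0 < s → ∀ z, |f (z + 2 * s) - 2 * f (z + s) + f z| ≤ K * s)
    (z : ℝ) {t : ℝ} (ht : 0 < t) :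
    |f (z + t) - f z| ≤ 2 * (t * |log t|) * K + 2 * t * C := by
  have hC : 0 ≤ C := by simpa using (abs_nonneg _).trans (hHol 1 0)
  have hHol' : ∀ s, 0 < s → |f (z + s) - f z| ≤ C * s ^ γ := fun s hs => by
    simpa [abs_of_pos hs] using hHol (z + s) z
  by_cases hsmall : t < 1 / 2
  · obtain ⟨n, hn, hnlog⟩ := exists_one_le_two_pow_mul_and_le_four_mul_abs_log ht hsmall
    have hcoarse : C * (2 ^ n * t) ^ γ / 2 ^ n ≤ C * t := by
      rw [div_le_iff₀ (by positivity)]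
      nlinarith [rpow_le_self_of_one_le hn hγ.2]
    calc |f (z + t) - f z|
        ≤ |f (z + 2 ^ n * t) - f z| / 2 ^ n + n * K * t / 2 :=
          abs_sub_le_dyadic_of_second_diff hf n ht z
      _ ≤ C * (2 ^ n * t) ^ γ / 2 ^ n + 4 * |log t| * K * t / 2 := by
          gcongr
          exact hHol' _ (by positivity)
      _ ≤ 2 * (t * |log t|) * K + 2 * t * C := by
          nlinarith [mul_nonneg (mul_nonneg ht.le (abs_nonneg (log t))) hK]
  · calc |f (z + t) - f z| ≤ C * t ^ γ := hHol' t ht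
      _ ≤ C * (2 * t) := by
          gcongr
          exact rpow_le_two_mul_of_one_half_le hγ (not_lt.mp hsmall)
      _ ≤ 2 * (t * |log t|) * K + 2 * t * C := by
          nlinarith [mul_nonneg (mul_nonneg ht.le (abs_nonneg (log t))) hK]

/-- Borderline case `α + β = 1`: if `f : ℝ → ℝ` is bounded with `[f]_{C^γ} ≤ Cγ` and the
difference quotients `f_{β,h}` satisfy `[f_{β,h}]_{C^α} ≤ K` for all `h > 0` (with
`β = 1 - α`), then `|f (x+y) - f x| ≤ N |y log |y|| K + N |y| Cγ`, where `N = N(γ)`. -/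
theorem log_lipschitz_from_difference_quotients (γ : ℝ) (hγ : γ ∈ Set.Ioo (0:ℝ) 1) :
    ∃ N : ℝ, 0 < N ∧ ∀ (α β : ℝ), α ∈ Set.Ioo (0:ℝ) 1 → β = 1 - α →
      ∀ (f : ℝ → ℝ) (K Cγ : ℝ), 0 < K →
      (∃ M : ℝ, ∀ x, |f x| ≤ M) →
      (∀ x y : ℝ, |f x - f y| ≤ Cγ * |x - y| ^ γ) →
      (∀ h : ℝ, 0 < h → ∀ x y : ℝ,
        |h ^ (-β) * (f (x + h) - f x) - h ^ (-β) * (f (y + h) - f y)| ≤ K * |x - y| ^ α) →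
      ∀ x y : ℝ, y ≠ 0 →
        |f (x + y) - f x| ≤ N * abs (y * Real.log (abs y)) * K + N * |y| * Cγ := by
  refine ⟨2, two_pos, ?_⟩
  rintro α β - rfl f K Cγ hK - hHol hq x y hy
  have hsecond : ∀ s, 0 < s → ∀ z, |f (z + 2 * s) - 2 * f (z + s) + f z| ≤ K * s :=
    fun s hs => abs_second_diff_le_of_holder_diff_quotient hs (hq s hs)
  have hpos : ∀ z t, 0 < t → |f (z + t) - f z| ≤ 2 * (t * |log t|) * K + 2 * t * Cγ :=
    fun z t ht => abs_sub_le_of_holder_of_second_diff (Ioo_subset_Icc_self hγ) hK.le hHol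
      hsecond z ht
  rw [abs_mul]
  exact abs_sub_le_of_forall_pos_increment hpos x hy
end

section
/- Let α ∈ (0,1), β ∈ (0,1−α), and f : ℝ^d → ℝ be bounded. Suppose that for every nonzero h ∈ ℝ^d, the second difference bound sup_x |f(x+h) + f(x−h) − 2f(x)| ≤ K |h|^{α+β} holds with a constant K (this is a Zygmund-type bound of order α+β ∈ (0,1)). Then for every nonzero h, y ∈ ℝ^d with |h| ≥ |y|, one has sup_x |(T_h − 1)(T_y − 1)² f (x)| ≤ N |h|^β |y|^α (‖f‖_∞ + K), where N = N(α, β) and T_h is the shift operator. -/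
/-! `(T_y - 1)² f (x)` is the symmetric second difference of `f` at `x + y` with step `y`,
hence at most `K |y|^(α+β)`; applying `T_h - 1` at most doubles a sup bound, and
`|y|^(α+β) ≤ |h|^β |y|^α` because `|y| ≤ |h|` and `β ≥ 0`. -/

open Set

/-- The shift-difference operator `(T_h - 1) g (x) = g (x + h) - g x`. -/
noncomputable def shiftDiff {d : ℕ} (h : EuclideanSpace ℝ (Fin d))
    (g : EuclideanSpace ℝ (Fin d) → ℝ) : EuclideanSpace ℝ (Fin d) → ℝ :=
  fun x => g (x + h) - g x

section ShiftDiff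

variable {d : ℕ} (g : EuclideanSpace ℝ (Fin d) → ℝ) (y : EuclideanSpace ℝ (Fin d))

theorem shiftDiff_shiftDiff_self_apply (x : EuclideanSpace ℝ (Fin d)) :
    shiftDiff y (shiftDiff y g) x = g (x + y + y) + g (x + y - y) - 2 * g (x + y) := by
  simp only [shiftDiff, add_sub_cancel_right]
  ring

theorem abs_shiftDiff_le {C : ℝ} (hg : ∀ x, |g x| ≤ C) (x : EuclideanSpace ℝ (Fin d)) :
    |shiftDiff y g x| ≤ 2 * C :=
  calc |g (x + y) - g x| ≤ |g (x + y)| + |g x| := abs_sub _ _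
    _ ≤ 2 * C := by linarith [hg (x + y), hg x]

theorem abs_shiftDiff_shiftDiff_self_le {C : ℝ}
    (hg : ∀ z, |g (z + y) + g (z - y) - 2 * g z| ≤ C) (x : EuclideanSpace ℝ (Fin d)) :
    |shiftDiff y (shiftDiff y g) x| ≤ C := by
  rw [shiftDiff_shiftDiff_self_apply]
  exact hg (x + y)

end ShiftDiff

theorem Real.rpow_add_le_rpow_mul_rpow {a b : ℝ} (ha : 0 < a) (hab : a ≤ b) (α : ℝ) {β : ℝ}
    (hβ : 0 ≤ β) : a ^ (α + β) ≤ b ^ β * a ^ α := by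
  rw [Real.rpow_add ha, mul_comm]
  exact mul_le_mul_of_nonneg_right (Real.rpow_le_rpow ha.le hab hβ) (Real.rpow_nonneg ha.le α)

theorem mixed_difference_bound_general (d : ℕ) (α β : ℝ)
    (hβ : β ∈ Set.Ioo (0:ℝ) (1 - α)) :
    ∃ N : ℝ, 0 < N ∧ ∀ (f : EuclideanSpace ℝ (Fin d) → ℝ) (M K : ℝ), 0 ≤ M → 0 ≤ K →
      (∀ x, |f x| ≤ M) →
      (∀ h : EuclideanSpace ℝ (Fin d), h ≠ 0 →
        ∀ x, |f (x + h) + f (x - h) - 2 * f x| ≤ K * ‖h‖ ^ (α + β)) →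
      ∀ (h y : EuclideanSpace ℝ (Fin d)), h ≠ 0 → y ≠ 0 → ‖y‖ ≤ ‖h‖ →
        ∀ x, |shiftDiff h (shiftDiff y (shiftDiff y f)) x|
          ≤ N * ‖h‖ ^ β * ‖y‖ ^ α * (M + K) := by
  refine ⟨2, two_pos, fun f M K hM hK _ hzyg h y _ hy hyh x => ?_⟩
  have hpow : ‖y‖ ^ (α + β) ≤ ‖h‖ ^ β * ‖y‖ ^ α :=
    Real.rpow_add_le_rpow_mul_rpow (norm_pos_iff.mpr hy) hyh α hβ.1.le
  have hprod : 0 ≤ ‖h‖ ^ β * ‖y‖ ^ α := by positivity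
  calc |shiftDiff h (shiftDiff y (shiftDiff y f)) x|
      ≤ 2 * (K * ‖y‖ ^ (α + β)) :=
        abs_shiftDiff_le _ h (abs_shiftDiff_shiftDiff_self_le f y (hzyg y hy)) x
    _ ≤ 2 * (K * (‖h‖ ^ β * ‖y‖ ^ α)) := by gcongr
    _ ≤ 2 * ‖h‖ ^ β * ‖y‖ ^ α * (M + K) := by nlinarith [mul_nonneg hprod hM]

/-- If `f` is bounded with Zygmund bound of order `α + β ∈ (0,1)`, then for `|h| ≥ |y|`,
`‖(T_h - 1)(T_y - 1)² f‖_∞ ≤ N |h|^β |y|^α (‖f‖_∞ + K)` with `N = N(α,β)`. -/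
theorem mixed_difference_bound (d : ℕ) (α β : ℝ) (hα : α ∈ Set.Ioo (0:ℝ) 1)
    (hβ : β ∈ Set.Ioo (0:ℝ) (1 - α)) :
    ∃ N : ℝ, 0 < N ∧ ∀ (f : EuclideanSpace ℝ (Fin d) → ℝ) (M K : ℝ), 0 ≤ M → 0 ≤ K →
      (∀ x, |f x| ≤ M) →
      (∀ h : EuclideanSpace ℝ (Fin d), h ≠ 0 →
        ∀ x, |f (x + h) + f (x - h) - 2 * f x| ≤ K * ‖h‖ ^ (α + β)) →
      ∀ (h y : EuclideanSpace ℝ (Fin d)), h ≠ 0 → y ≠ 0 → ‖y‖ ≤ ‖h‖ →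
        ∀ x, |shiftDiff h (shiftDiff y (shiftDiff y f)) x|
          ≤ N * ‖h‖ ^ β * ‖y‖ ^ α * (M + K) :=
  mixed_difference_bound_general d α β hβ
end

section
/- Summability of dyadic mean oscillations: Let σ > 0 and let u ∈ L¹(ℝ^d, ω) with weight ω(x) = 1/(1+|x|^{d+σ}). Then Σ_{k=1}^∞ 2^{−kσ} ⨍_{B_{2^k}} |u − (u)_{B_{2^k}}| dx ≤ N(d,σ) ‖u‖_{L¹(ℝ^d, ω)}, so in particular the series converges. -/
/-!
Each mean oscillation is at most twice the mean of `|u|`, and `|B_R| = R^d |B_1|`, so the `k`-th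
term is at most `(2 / |B_1|) R_k^{-β} ∫_{B_{R_k}} |u|` with `R_k = 2^(k+1)` and `β = d + σ`.
Summing under the integral, it remains to bound `S(t) = ∑_k R_k^{-β} 1[t < R_k]` by a multiple
of `(1 + t^β)⁻¹`. Peeling off the first term gives the recursion
`S(t) = 2^{-β} (S(t/2) + 1[t < 2])`, of which `C / (1 + t^β)` is a supersolution for
`C = 2 (1 + 2^β) / (2^β - 1)`.
-/

open MeasureTheory Metric Finset Module

section MeanOscillation

variable {α : Type*} [MeasurableSpace α]

noncomputable def meanOscillation (μ : Measure α) (s : Set α) (f : α → ℝ) : ℝ :=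
  ⨍ x in s, |f x - ⨍ y in s, f y ∂μ| ∂μ

theorem meanOscillation_nonneg (μ : Measure α) (s : Set α) (f : α → ℝ) :
    0 ≤ meanOscillation μ s f :=
  integral_nonneg fun _ => abs_nonneg _

theorem integral_abs_sub_average_le (μ : Measure α) [IsFiniteMeasure μ] (f : α → ℝ) :
    ∫ x, |f x - ⨍ y, f y ∂μ| ∂μ ≤ 2 * ∫ x, |f x| ∂μ := by
  have habs : 0 ≤ ∫ x, |f x| ∂μ := integral_nonneg fun _ => abs_nonneg _
  by_cases hf : Integrable f μ
  · set c := ⨍ y, f y ∂μ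
    have hc : μ.real Set.univ * |c| ≤ ∫ x, |f x| ∂μ := by
      rw [← abs_of_nonneg measureReal_nonneg, ← abs_mul, ← smul_eq_mul, measure_smul_average]
      exact abs_integral_le_integral_abs
    calc ∫ x, |f x - c| ∂μ ≤ ∫ x, (|f x| + |c|) ∂μ :=
          integral_mono (hf.sub (integrable_const c)).abs (hf.abs.add (integrable_const _))
            fun x => abs_sub _ _
      _ = ∫ x, |f x| ∂μ + μ.real Set.univ * |c| := by
          rw [integral_add hf.abs (integrable_const _), integral_const, smul_eq_mul]
      _ ≤ 2 * ∫ x, |f x| ∂μ := by linarith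
  · rw [average_eq, integral_undef hf, smul_zero]
    simp only [sub_zero]
    linarith

theorem meanOscillation_le (μ : Measure α) {s : Set α} (hs : μ s ≠ ⊤) (f : α → ℝ) :
    meanOscillation μ s f ≤ 2 * (μ.real s)⁻¹ * ∫ x in s, |f x| ∂μ := by
  have : Fact (μ s < ⊤) := ⟨hs.lt_top⟩
  rw [meanOscillation, setAverage_eq, smul_eq_mul, mul_comm 2, mul_assoc]
  gcongr
  exact integral_abs_sub_average_le _ f

theorem sum_mul_setIntegral_le {ι : Type*} (μ : Measure α) (I : Finset ι) {s : ι → Set α}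
    (hs : ∀ i, MeasurableSet (s i)) {c : ι → ℝ} {f w : α → ℝ} (hf : 0 ≤ f)
    (hfs : ∀ i ∈ I, IntegrableOn f (s i) μ) (hfw : Integrable (fun x => f x * w x) μ)
    {K : ℝ} (hw : ∀ x, ∑ i ∈ I, (s i).indicator (fun _ => c i) x ≤ K * w x) :
    ∑ i ∈ I, c i * ∫ x in s i, f x ∂μ ≤ K * ∫ x, f x * w x ∂μ := by
  have hint : ∀ i ∈ I, Integrable ((s i).indicator fun x => c i * f x) μ := fun i hi =>
    (integrable_indicator_iff (hs i)).2 ((hfs i hi).const_mul _)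
  calc ∑ i ∈ I, c i * ∫ x in s i, f x ∂μ
      = ∫ x, ∑ i ∈ I, (s i).indicator (fun x => c i * f x) x ∂μ := by
        rw [integral_finsetSum _ hint]
        refine sum_congr rfl fun i _ => ?_
        rw [integral_indicator (hs i), integral_const_mul]
    _ ≤ ∫ x, K * (f x * w x) ∂μ := by
        refine integral_mono (integrable_finsetSum _ hint) (hfw.const_mul K) fun x => ?_
        have hsum : ∑ i ∈ I, (s i).indicator (fun x => c i * f x) x =
            f x * ∑ i ∈ I, (s i).indicator (fun _ => c i) x := by
          rw [mul_sum]
          refine sum_congr rfl fun i _ => ?_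
          by_cases hx : x ∈ s i <;> simp [hx, mul_comm]
        rw [hsum, mul_left_comm]
        exact mul_le_mul_of_nonneg_left (hw x) (hf x)
    _ = K * ∫ x, f x * w x ∂μ := integral_const_mul _ _

end MeanOscillation

theorem locallyIntegrable_of_integrable_mul_inv {X : Type*} [MeasurableSpace X]
    [TopologicalSpace X] [OpensMeasurableSpace X] [LocallyCompactSpace X] [T2Space X]
    {μ : Measure X} {f w : X → ℝ} (hw : Continuous w) (hw0 : ∀ x, w x ≠ 0)
    (h : Integrable (fun x => f x * (w x)⁻¹) μ) : LocallyIntegrable f μ :=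
  (h.locallyIntegrable.mul_continuous hw).congr
    (Filter.Eventually.of_forall fun x => inv_mul_cancel_right₀ (hw0 x) (f x))

noncomputable def dyadicConst (b : ℝ) : ℝ :=
  2 * (1 + b) / (b - 1)

theorem dyadicConst_pos {b : ℝ} (hb : 1 < b) : 0 < dyadicConst b := by
  have : 0 < b - 1 := by linarith
  unfold dyadicConst
  positivity

theorem dyadicConst_div_supersolution {a b : ℝ} (ha : 0 ≤ a) (hb : 1 < b) :
    b⁻¹ * (dyadicConst b / (1 + a / b)) + (if a < b then b⁻¹ else 0) ≤
      dyadicConst b / (1 + a) := by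
  have hb0 : 0 < b := by linarith
  have hC : dyadicConst b * (b - 1) = 2 * (1 + b) := div_mul_cancel₀ _ (by linarith)
  have hscale : b⁻¹ * (dyadicConst b / (1 + a / b)) = dyadicConst b / (b + a) := by
    field_simp
  rw [hscale]
  split_ifs with hab
  · have hsmall : b⁻¹ * ((b + a) * (1 + a)) ≤ 2 * (1 + b) := by
      rw [inv_mul_le_iff₀ hb0]
      nlinarith
    rw [div_add' _ _ _ (by positivity), div_le_div_iff₀ (by positivity) (by positivity)]
    nlinarith
  · rw [add_zero]
    have := dyadicConst_pos hb
    gcongr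

theorem sum_range_dyadic_rpow_inv_le {β : ℝ} (hβ : 0 < β) (n : ℕ) {t : ℝ} (ht : 0 ≤ t) :
    ∑ k ∈ range n, (if t < 2 ^ (k + 1) then (((2:ℝ) ^ (k + 1)) ^ β)⁻¹ else 0) ≤
      dyadicConst (2 ^ β) / (1 + t ^ β) := by
  have hb : (1:ℝ) < 2 ^ β := Real.one_lt_rpow one_lt_two hβ
  induction n generalizing t with
  | zero =>
    rw [sum_range_zero]
    have := dyadicConst_pos hb
    positivity
  | succ n ih =>
    have hshift : ∀ k : ℕ,
        (if t < 2 ^ (k + 1 + 1) then (((2:ℝ) ^ (k + 1 + 1)) ^ β)⁻¹ else 0) =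
        (2 ^ β)⁻¹ * (if t / 2 < 2 ^ (k + 1) then (((2:ℝ) ^ (k + 1)) ^ β)⁻¹ else 0) := by
      intro k
      rw [pow_succ 2 (k + 1), Real.mul_rpow (by positivity) zero_le_two, mul_inv]
      simp only [div_lt_iff₀ (two_pos (α := ℝ))]
      split_ifs <;> ring
    rw [sum_range_succ']
    simp only [hshift, ← mul_sum, zero_add, pow_one, ← Real.rpow_lt_rpow_iff ht zero_le_two hβ]
    calc _ ≤ (2 ^ β)⁻¹ * (dyadicConst (2 ^ β) / (1 + (t / 2) ^ β)) +
          (if t ^ β < 2 ^ β then ((2:ℝ) ^ β)⁻¹ else 0) := by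
          gcongr
          exact ih (by positivity)
      _ ≤ _ := by
          rw [Real.div_rpow ht zero_le_two]
          exact dyadicConst_div_supersolution (Real.rpow_nonneg ht β) hb

theorem measureReal_ball_pos {X : Type*} [PseudoMetricSpace X] [ProperSpace X]
    [MeasurableSpace X] (μ : Measure X) [μ.IsOpenPosMeasure] [IsFiniteMeasureOnCompacts μ]
    (x : X) {R : ℝ} (hR : 0 < R) : 0 < μ.real (ball x R) :=
  ENNReal.toReal_pos (measure_ball_pos μ x hR).ne' measure_ball_lt_top.ne

section AddHaar

variable {E : Type*} [NormedAddCommGroup E] [NormedSpace ℝ E] [FiniteDimensional ℝ E]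
  [MeasurableSpace E] [BorelSpace E] (μ : Measure E) [μ.IsAddHaarMeasure]

theorem addHaar_real_ball_zero_of_pos {R : ℝ} (hR : 0 < R) :
    μ.real (ball (0 : E) R) = R ^ finrank ℝ E * μ.real (ball 0 1) := by
  rw [measureReal_def, Measure.addHaar_ball_of_pos μ 0 hR, ENNReal.toReal_mul,
    ENNReal.toReal_ofReal (by positivity), measureReal_def]

theorem rpow_mul_meanOscillation_dyadic_ball_le (σ : ℝ) (u : E → ℝ) (k : ℕ) :
    (2:ℝ) ^ (-((k:ℝ) + 1) * σ) * meanOscillation μ (ball 0 (2 ^ (k + 1))) u ≤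
      2 / μ.real (ball 0 1) * (((2:ℝ) ^ (k + 1)) ^ ((finrank ℝ E : ℝ) + σ))⁻¹ *
        ∫ x in ball 0 (2 ^ (k + 1)), |u x| ∂μ := by
  set R : ℝ := 2 ^ (k + 1)
  have hR : 0 < R := by positivity
  have hv := measureReal_ball_pos μ 0 one_pos
  have hRσ : (2:ℝ) ^ (-((k:ℝ) + 1) * σ) = (R ^ σ)⁻¹ := by
    rw [neg_mul, Real.rpow_neg zero_le_two, Real.rpow_mul zero_le_two]
    congr 2
    simp only [R]
    exact_mod_cast Real.rpow_natCast 2 (k + 1)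
  have hscale : (2:ℝ) ^ (-((k:ℝ) + 1) * σ) * (2 * (μ.real (ball 0 R))⁻¹) =
      2 / μ.real (ball 0 1) * (R ^ ((finrank ℝ E : ℝ) + σ))⁻¹ := by
    rw [hRσ, addHaar_real_ball_zero_of_pos μ hR, Real.rpow_add hR, Real.rpow_natCast]
    field_simp
  calc (2:ℝ) ^ (-((k:ℝ) + 1) * σ) * meanOscillation μ (ball 0 R) u
      ≤ (2:ℝ) ^ (-((k:ℝ) + 1) * σ) *
          (2 * (μ.real (ball 0 R))⁻¹ * ∫ x in ball 0 R, |u x| ∂μ) := by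
        gcongr
        exact meanOscillation_le μ measure_ball_lt_top.ne u
    _ = _ := by rw [← hscale]; ring

theorem sum_range_rpow_mul_meanOscillation_dyadic_ball_le {σ : ℝ}
    (hβ : 0 < (finrank ℝ E : ℝ) + σ) {u : E → ℝ}
    (hu : Integrable (fun x => |u x| * (1 + ‖x‖ ^ ((finrank ℝ E : ℝ) + σ))⁻¹) μ)
    (n : ℕ) :
    ∑ k ∈ range n, (2:ℝ) ^ (-((k:ℝ) + 1) * σ) *
        meanOscillation μ (ball 0 (2 ^ (k + 1))) u ≤
      2 / μ.real (ball 0 1) * dyadicConst (2 ^ ((finrank ℝ E : ℝ) + σ)) *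
        ∫ x, |u x| * (1 + ‖x‖ ^ ((finrank ℝ E : ℝ) + σ))⁻¹ ∂μ := by
  set β : ℝ := finrank ℝ E + σ
  have hw : Continuous fun x : E => 1 + ‖x‖ ^ β :=
    continuous_const.add (continuous_norm.rpow_const fun _ => Or.inr hβ.le)
  have hloc : LocallyIntegrable (fun x => |u x|) μ :=
    locallyIntegrable_of_integrable_mul_inv hw (fun x => by positivity) hu
  refine (sum_le_sum fun k _ => rpow_mul_meanOscillation_dyadic_ball_le μ σ u k).trans
    (sum_mul_setIntegral_le μ _ (fun _ => measurableSet_ball) (fun x => abs_nonneg (u x))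
      (fun k _ => (hloc.integrableOn_isCompact (isCompact_closedBall 0 _)).mono_set
        ball_subset_closedBall) hu fun x => ?_)
  calc ∑ k ∈ range n, (ball 0 (2 ^ (k + 1))).indicator (fun _ => 2 / μ.real (ball 0 1) *
          (((2:ℝ) ^ (k + 1)) ^ β)⁻¹) x
      = 2 / μ.real (ball 0 1) *
          ∑ k ∈ range n,
            if ‖x‖ < 2 ^ (k + 1) then (((2:ℝ) ^ (k + 1)) ^ β)⁻¹ else 0 := by
        rw [mul_sum]
        refine sum_congr rfl fun k _ => ?_
        by_cases hx : ‖x‖ < 2 ^ (k + 1) <;> simp [hx]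
    _ ≤ 2 / μ.real (ball 0 1) * (dyadicConst (2 ^ β) / (1 + ‖x‖ ^ β)) := by
        gcongr
        exact sum_range_dyadic_rpow_inv_le hβ n (norm_nonneg x)
    _ = _ := by ring

theorem exists_tsum_meanOscillation_dyadic_ball_le {σ : ℝ}
    (hβ : 0 < (finrank ℝ E : ℝ) + σ) :
    ∃ N : ℝ, 0 < N ∧ ∀ u : E → ℝ,
      Integrable (fun x => |u x| * (1 + ‖x‖ ^ ((finrank ℝ E : ℝ) + σ))⁻¹) μ →
      Summable (fun k : ℕ => (2:ℝ) ^ (-((k:ℝ) + 1) * σ) *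
        meanOscillation μ (ball 0 ((2:ℝ) ^ (k + 1))) u) ∧
      (∑' k : ℕ, (2:ℝ) ^ (-((k:ℝ) + 1) * σ) *
          meanOscillation μ (ball 0 ((2:ℝ) ^ (k + 1))) u)
        ≤ N * ∫ x, |u x| * (1 + ‖x‖ ^ ((finrank ℝ E : ℝ) + σ))⁻¹ ∂μ := by
  have hv := measureReal_ball_pos μ 0 one_pos
  have hC : 0 < dyadicConst (2 ^ ((finrank ℝ E : ℝ) + σ)) :=
    dyadicConst_pos (Real.one_lt_rpow one_lt_two hβ)
  refine ⟨2 / μ.real (ball 0 1) * dyadicConst (2 ^ ((finrank ℝ E : ℝ) + σ)), by positivity,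
    fun u hu => ?_⟩
  have hnonneg : ∀ k : ℕ, 0 ≤ (2:ℝ) ^ (-((k:ℝ) + 1) * σ) *
      meanOscillation μ (ball 0 ((2:ℝ) ^ (k + 1))) u := fun k =>
    mul_nonneg (by positivity) (meanOscillation_nonneg _ _ _)
  have hsum := sum_range_rpow_mul_meanOscillation_dyadic_ball_le μ hβ hu
  exact ⟨summable_of_sum_range_le hnonneg hsum, Real.tsum_le_of_sum_range_le hnonneg hsum⟩

end AddHaar

theorem dyadic_mean_oscillation_summable_general (d : ℕ) (σ : ℝ) (hσ : 0 < σ) :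
    ∃ N : ℝ, 0 < N ∧ ∀ u : EuclideanSpace ℝ (Fin d) → ℝ,
      Integrable (fun x => |u x| * (1 + ‖x‖ ^ ((d:ℝ) + σ))⁻¹) →
      Summable (fun k : ℕ => (2:ℝ) ^ (-((k:ℝ) + 1) * σ) *
        ⨍ x in Metric.ball (0:EuclideanSpace ℝ (Fin d)) ((2:ℝ) ^ (k + 1)),
          |u x - ⨍ y in Metric.ball (0:EuclideanSpace ℝ (Fin d)) ((2:ℝ) ^ (k + 1)), u y|) ∧
      (∑' k : ℕ, (2:ℝ) ^ (-((k:ℝ) + 1) * σ) *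
        ⨍ x in Metric.ball (0:EuclideanSpace ℝ (Fin d)) ((2:ℝ) ^ (k + 1)),
          |u x - ⨍ y in Metric.ball (0:EuclideanSpace ℝ (Fin d)) ((2:ℝ) ^ (k + 1)), u y|)
        ≤ N * ∫ x, |u x| * (1 + ‖x‖ ^ ((d:ℝ) + σ))⁻¹ := by
  obtain ⟨N, hN, h⟩ := exists_tsum_meanOscillation_dyadic_ball_le
    (volume : Measure (EuclideanSpace ℝ (Fin d))) (by positivity)
  rw [finrank_euclideanSpace_fin] at h
  exact ⟨N, hN, h⟩

/-- Summability of dyadic mean oscillations: if `u ∈ L¹(ℝ^d, ω)` with weight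
`ω(x) = 1/(1 + |x|^{d+σ})`, then
`∑_{k≥1} 2^{-kσ} ⨍_{B_{2^k}} |u - (u)_{B_{2^k}}| ≤ N(d,σ) ‖u‖_{L¹(ω)}`. -/
theorem dyadic_mean_oscillation_summable (d : ℕ) (hd : 0 < d) (σ : ℝ) (hσ : 0 < σ) :
    ∃ N : ℝ, 0 < N ∧ ∀ u : EuclideanSpace ℝ (Fin d) → ℝ,
      Integrable (fun x => |u x| * (1 + ‖x‖ ^ ((d:ℝ) + σ))⁻¹) →
      Summable (fun k : ℕ => (2:ℝ) ^ (-((k:ℝ) + 1) * σ) *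
        ⨍ x in Metric.ball (0:EuclideanSpace ℝ (Fin d)) ((2:ℝ) ^ (k + 1)),
          |u x - ⨍ y in Metric.ball (0:EuclideanSpace ℝ (Fin d)) ((2:ℝ) ^ (k + 1)), u y|) ∧
      (∑' k : ℕ, (2:ℝ) ^ (-((k:ℝ) + 1) * σ) *
        ⨍ x in Metric.ball (0:EuclideanSpace ℝ (Fin d)) ((2:ℝ) ^ (k + 1)),
          |u x - ⨍ y in Metric.ball (0:EuclideanSpace ℝ (Fin d)) ((2:ℝ) ^ (k + 1)), u y|)
        ≤ N * ∫ x, |u x| * (1 + ‖x‖ ^ ((d:ℝ) + σ))⁻¹ :=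
  dyadic_mean_oscillation_summable_general d σ hσ
end

section
/- Dyadic iteration lemma: Let (M_l)_{l ∈ ℤ} be a bounded sequence of nonnegative reals, ω̃ a nonnegative increasing function, σ > 0, and suppose there exist constants N₀ > 0 and α₀ > 0 such that for every integer s ≥ 1 and every l ∈ ℤ, M_l ≤ N₀ 2^{sd/2} ω̃(2^{1+s+l}) + N₀ 2^{−sα₀} Σ_{k=1}^∞ 2^{−kσ} M_{k+s+l}. Then, defining M̃_l = Σ_{j=0}^∞ 2^{−jσ/2} M_{l+j} (assumed finite and bounded in l) and ω̃̃(t) = Σ_{j=0}^∞ 2^{−jσ/2} ω̃(2^j t), there exists a fixed integer s (depending on N₀, α₀, σ, d) such that for every l ∈ ℤ, M_l ≤ N Σ_{j=1}^∞ 2^{−j} ω̃̃(2^{1+js+l}) for a constant N. -/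
/-!
Put `r = 2^(-σ/2)` and `M̃_l = geomTail r M l = ∑_j r^j M_{l+j}`. Summing the hypothesis
against `r^j`, and swapping the resulting double sum (whose weights `2^(-kσ) = r^(2k)` decay
twice as fast), gives `M̃_l ≤ A ω̃̃(2^(1+s+l)) + N₀ 2^(-sα₀) (1 - r)⁻¹ M̃_{l+s}`. For `s` large the last
coefficient is at most `1/2`, and iterating this contraction along `l, l+s, l+2s, …`
leaves a remainder `2^(-m) sup M̃ → 0`.
-/

open Filter Topology

noncomputable def geomTail (r : ℝ) (M : ℤ → ℝ) (l : ℤ) : ℝ := ∑' j : ℕ, r ^ j * M (l + j)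

section GeomTail

variable {r B : ℝ} {M : ℤ → ℝ}

theorem summable_geomTail (hr0 : 0 ≤ r) (hr1 : r < 1) (hM0 : ∀ l, 0 ≤ M l)
    (hMB : ∀ l, M l ≤ B) (l : ℤ) : Summable fun j : ℕ => r ^ j * M (l + j) :=
  Summable.of_nonneg_of_le (fun j => mul_nonneg (pow_nonneg hr0 j) (hM0 _))
    (fun j => mul_le_mul_of_nonneg_left (hMB _) (pow_nonneg hr0 j))
    ((summable_geometric_of_lt_one hr0 hr1).mul_right B)

theorem geomTail_nonneg (hr0 : 0 ≤ r) (hM0 : ∀ l, 0 ≤ M l) (l : ℤ) : 0 ≤ geomTail r M l :=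
  tsum_nonneg fun j => mul_nonneg (pow_nonneg hr0 j) (hM0 _)

theorem geomTail_le (hr0 : 0 ≤ r) (hr1 : r < 1) (hM0 : ∀ l, 0 ≤ M l) (hMB : ∀ l, M l ≤ B)
    (l : ℤ) : geomTail r M l ≤ (1 - r)⁻¹ * B :=
  calc geomTail r M l ≤ ∑' j : ℕ, r ^ j * B :=
        (summable_geomTail hr0 hr1 hM0 hMB l).tsum_le_tsum
          (fun j => mul_le_mul_of_nonneg_left (hMB _) (pow_nonneg hr0 j))
          ((summable_geometric_of_lt_one hr0 hr1).mul_right B)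
    _ = (1 - r)⁻¹ * B := by rw [tsum_mul_right, tsum_geometric_of_lt_one hr0 hr1]

theorem geomTail_eq_sum_add (hr0 : 0 ≤ r) (hr1 : r < 1) (hM0 : ∀ l, 0 ≤ M l)
    (hMB : ∀ l, M l ≤ B) (l : ℤ) (m : ℕ) :
    geomTail r M l = ∑ j ∈ Finset.range m, r ^ j * M (l + j) + r ^ m * geomTail r M (l + m) := by
  rw [geomTail, ← (summable_geomTail hr0 hr1 hM0 hMB l).sum_add_tsum_nat_add m, geomTail,
    ← tsum_mul_left]
  congr 1
  refine tsum_congr fun j => ?_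
  push_cast
  ring_nf

theorem le_geomTail (hr0 : 0 ≤ r) (hr1 : r < 1) (hM0 : ∀ l, 0 ≤ M l) (hMB : ∀ l, M l ≤ B)
    (l : ℤ) : M l ≤ geomTail r M l := by
  rw [geomTail_eq_sum_add hr0 hr1 hM0 hMB l 1]
  simpa using mul_nonneg (pow_nonneg hr0 1) (geomTail_nonneg hr0 hM0 (l + 1))

theorem pow_mul_geomTail_add_le (hr0 : 0 ≤ r) (hr1 : r < 1) (hM0 : ∀ l, 0 ≤ M l)
    (hMB : ∀ l, M l ≤ B) (l : ℤ) (m : ℕ) : r ^ m * geomTail r M (l + m) ≤ geomTail r M l := by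
  rw [geomTail_eq_sum_add hr0 hr1 hM0 hMB l m]
  exact le_add_of_nonneg_left
    (Finset.sum_nonneg fun j _ => mul_nonneg (pow_nonneg hr0 j) (hM0 _))

/-- After swapping the sums, the weight `r ^ (j + 2k)` splits as `r ^ k * r ^ (j + k)`. -/
theorem geomTail_geomTail_sq_le (hr0 : 0 ≤ r) (hr1 : r < 1) (hM0 : ∀ l, 0 ≤ M l)
    (hMB : ∀ l, M l ≤ B) (l : ℤ) :
    geomTail r (geomTail (r ^ 2) M) l ≤ (1 - r)⁻¹ * geomTail r M l := by
  have hr2_0 : 0 ≤ r ^ 2 := pow_nonneg hr0 2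
  have hr2_1 : r ^ 2 < 1 := pow_lt_one₀ hr0 hr1 two_ne_zero
  have hgeo := summable_geometric_of_lt_one hr0 hr1
  set F : ℕ → ℕ → ℝ := fun j k => r ^ j * ((r ^ 2) ^ k * M (l + j + k))
  have hF_summable : Summable (Function.uncurry F) :=
    Summable.of_nonneg_of_le
      (fun p => mul_nonneg (pow_nonneg hr0 _) (mul_nonneg (pow_nonneg hr2_0 _) (hM0 _)))
      (fun p => by
        simpa only [F, Function.uncurry, mul_assoc] using mul_le_mul_of_nonneg_left
          (mul_le_mul_of_nonneg_left (hMB _) (pow_nonneg hr2_0 p.2)) (pow_nonneg hr0 p.1))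
      ((Summable.mul_of_nonneg hgeo (summable_geometric_of_lt_one hr2_0 hr2_1)
        (fun j => pow_nonneg hr0 j) (fun k => pow_nonneg hr2_0 k)).mul_right B)
  have hrows : ∀ j, Summable (F j) := fun j =>
    (summable_geomTail hr2_0 hr2_1 hM0 hMB (l + j)).mul_left (r ^ j)
  have hcols : ∀ k : ℕ, Summable fun j => F j k := fun k =>
    ((summable_geomTail hr0 hr1 hM0 hMB (l + k)).mul_left ((r ^ 2) ^ k)).congr fun j => by
      simp only [F, add_right_comm l (j : ℤ)]; ring
  have hdiag : ∀ k : ℕ, ∑' j, F j k = r ^ k * (r ^ k * geomTail r M (l + k)) := fun k => by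
    rw [geomTail, ← tsum_mul_left, ← tsum_mul_left]
    refine tsum_congr fun j => ?_
    simp only [F, add_right_comm l (j : ℤ)]; ring
  have hdiag_le : ∀ k : ℕ, r ^ k * (r ^ k * geomTail r M (l + k)) ≤ r ^ k * geomTail r M l :=
    fun k => mul_le_mul_of_nonneg_left (pow_mul_geomTail_add_le hr0 hr1 hM0 hMB l k)
      (pow_nonneg hr0 k)
  have hdiag_summable : Summable fun k : ℕ => r ^ k * (r ^ k * geomTail r M (l + k)) :=
    Summable.of_nonneg_of_le (fun k => by have := geomTail_nonneg hr0 hM0 (l + k); positivity)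
      hdiag_le (hgeo.mul_right _)
  calc geomTail r (geomTail (r ^ 2) M) l = ∑' j, ∑' k, F j k := by
        simp only [geomTail, F, ← tsum_mul_left]
    _ = ∑' k, ∑' j, F j k := (hF_summable.tsum_comm' hrows hcols).symm
    _ ≤ ∑' k : ℕ, r ^ k * geomTail r M l := by
        simp only [hdiag]
        exact hdiag_summable.tsum_le_tsum hdiag_le (hgeo.mul_right _)
    _ = (1 - r)⁻¹ * geomTail r M l := by rw [tsum_mul_right, tsum_geometric_of_lt_one hr0 hr1]

theorem geomTail_le_add_of_le {f : ℤ → ℝ} {C θ η : ℝ} {s : ℤ} (hr0 : 0 ≤ r) (hr1 : r < 1)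
    (hM0 : ∀ l, 0 ≤ M l) (hMB : ∀ l, M l ≤ B) (hf0 : ∀ l, 0 ≤ f l) (hfC : ∀ l, f l ≤ C)
    (hθ : 0 ≤ θ) (hθη : θ * (1 - r)⁻¹ ≤ η)
    (h : ∀ l, M l ≤ f l + θ * geomTail (r ^ 2) M (l + s)) (l : ℤ) :
    geomTail r M l ≤ geomTail r f l + η * geomTail r M (l + s) := by
  have hr2_0 : 0 ≤ r ^ 2 := pow_nonneg hr0 2
  have hr2_1 : r ^ 2 < 1 := pow_lt_one₀ hr0 hr1 two_ne_zero
  have hf_summable := summable_geomTail hr0 hr1 hf0 hfC l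
  have hK_summable := summable_geomTail hr0 hr1 (geomTail_nonneg hr2_0 hM0)
    (geomTail_le hr2_0 hr2_1 hM0 hMB) (l + s)
  have hterm : ∀ j : ℕ, r ^ j * M (l + j) ≤
      r ^ j * f (l + j) + θ * (r ^ j * geomTail (r ^ 2) M (l + s + j)) := fun j => by
    have := mul_le_mul_of_nonneg_left (h (l + j)) (pow_nonneg hr0 j)
    rw [add_right_comm] at this
    linarith
  calc geomTail r M l
      ≤ ∑' j : ℕ, (r ^ j * f (l + j) + θ * (r ^ j * geomTail (r ^ 2) M (l + s + j))) :=
        (summable_geomTail hr0 hr1 hM0 hMB l).tsum_le_tsum hterm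
          (hf_summable.add (hK_summable.mul_left θ))
    _ = geomTail r f l + θ * geomTail r (geomTail (r ^ 2) M) (l + s) := by
        rw [hf_summable.tsum_add (hK_summable.mul_left θ), tsum_mul_left]; rfl
    _ ≤ geomTail r f l + θ * ((1 - r)⁻¹ * geomTail r M (l + s)) := by
        gcongr
        exact geomTail_geomTail_sq_le hr0 hr1 hM0 hMB (l + s)
    _ ≤ geomTail r f l + η * geomTail r M (l + s) := by
        rw [← mul_assoc]
        gcongr
        exact geomTail_nonneg hr0 hM0 _

end GeomTail

theorem le_tsum_pow_mul_iterate {ι : Type*} (T : ι → ι) {X f : ι → ℝ} {θ B C : ℝ}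
    (hθ0 : 0 ≤ θ) (hθ1 : θ < 1) (hXB : ∀ i, X i ≤ B) (hf0 : ∀ i, 0 ≤ f i) (hfC : ∀ i, f i ≤ C)
    (h : ∀ i, X i ≤ f i + θ * X (T i)) (i : ι) :
    X i ≤ ∑' j : ℕ, θ ^ j * f (T^[j] i) := by
  have hpartial : ∀ (m : ℕ) (i : ι),
      X i ≤ ∑ j ∈ Finset.range m, θ ^ j * f (T^[j] i) + θ ^ m * X (T^[m] i) := by
    intro m
    induction m with
    | zero => simp
    | succ m ih =>
      intro i
      calc X i ≤ f i + θ * X (T i) := h i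
        _ ≤ f i + θ * (∑ j ∈ Finset.range m, θ ^ j * f (T^[j] (T i))
              + θ ^ m * X (T^[m] (T i))) := by
            gcongr; exact ih (T i)
        _ = _ := by
            simp only [Finset.sum_range_succ', Function.iterate_succ_apply, mul_add,
              Finset.mul_sum, Function.iterate_zero_apply, pow_succ', pow_zero, one_mul, mul_assoc]
            ring
  have hsummable : Summable fun j : ℕ => θ ^ j * f (T^[j] i) :=
    Summable.of_nonneg_of_le (fun j => mul_nonneg (pow_nonneg hθ0 j) (hf0 _))
      (fun j => mul_le_mul_of_nonneg_left (hfC _) (pow_nonneg hθ0 j))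
      ((summable_geometric_of_lt_one hθ0 hθ1).mul_right C)
  have hlim : Tendsto (fun m : ℕ => ∑' j : ℕ, θ ^ j * f (T^[j] i) + θ ^ m * B) atTop
      (𝓝 (∑' j : ℕ, θ ^ j * f (T^[j] i))) := by
    simpa using (tendsto_pow_atTop_nhds_zero_of_lt_one hθ0 hθ1).mul_const B |>.const_add _
  refine ge_of_tendsto' hlim fun m => (hpartial m i).trans ?_
  gcongr
  · exact hsummable.sum_le_tsum _ fun j _ => mul_nonneg (pow_nonneg hθ0 j) (hf0 _)
  · exact hXB _

theorem exists_pos_mul_pow_le (K : ℝ) {ρ ε : ℝ} (hε : 0 < ε) (hρ0 : 0 ≤ ρ) (hρ1 : ρ < 1) :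
    ∃ s : ℕ, 0 < s ∧ K * ρ ^ s ≤ ε := by
  have hlim : Tendsto (fun n : ℕ => K * ρ ^ n) atTop (𝓝 0) := by
    simpa using (tendsto_pow_atTop_nhds_zero_of_lt_one hρ0 hρ1).const_mul K
  obtain ⟨s, hs, hsmall⟩ := ((eventually_ge_atTop 1).and (hlim.eventually (ge_mem_nhds hε))).exists
  exact ⟨s, hs, hsmall⟩

theorem rpow_neg_natCast_mul {x : ℝ} (hx : 0 ≤ x) (n : ℕ) (a : ℝ) :
    x ^ (-(n : ℝ) * a) = (x ^ (-a)) ^ n := by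
  rw [← Real.rpow_mul_natCast hx]
  ring_nf

theorem geomTail_const_mul_comp_add (r a : ℝ) (g : ℤ → ℝ) (t l : ℤ) :
    geomTail r (fun x => a * g (x + t)) l = a * geomTail r g (l + t) := by
  rw [geomTail, geomTail, ← tsum_mul_left]
  refine tsum_congr fun j => ?_
  rw [add_right_comm]
  ring

theorem tsum_two_rpow_mul_eq_geomTail (σ : ℝ) (ω : ℝ → ℝ) (x : ℤ) :
    ∑' i : ℕ, (2:ℝ) ^ (-(i:ℝ) * σ / 2) * ω ((2:ℝ) ^ (i:ℤ) * (2:ℝ) ^ x) =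
      geomTail (2 ^ (-(σ / 2))) (fun y => ω (2 ^ y)) x := by
  refine tsum_congr fun i => ?_
  rw [mul_div_assoc, rpow_neg_natCast_mul zero_le_two, mul_comm ((2:ℝ) ^ (i:ℤ)),
    ← zpow_add₀ two_ne_zero]

theorem tsum_two_rpow_mul_le_geomTail {σ B : ℝ} {M : ℤ → ℝ} (hσ : 0 < σ)
    (hM0 : ∀ l, 0 ≤ M l) (hMB : ∀ l, M l ≤ B) (s l : ℤ) :
    ∑' k : ℕ, (2:ℝ) ^ (-((k:ℝ) + 1) * σ) * M (((k:ℤ) + 1) + s + l) ≤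
      geomTail ((2 ^ (-(σ / 2))) ^ 2) M (l + s) := by
  set r : ℝ := 2 ^ (-(σ / 2))
  have hr0 : 0 ≤ r ^ 2 := by positivity
  have hr1 : r ^ 2 < 1 :=
    pow_lt_one₀ (by positivity) (Real.rpow_lt_one_of_one_lt_of_neg one_lt_two (by linarith))
      two_ne_zero
  have hr2 : r ^ 2 = 2 ^ (-σ) := by
    rw [← rpow_neg_natCast_mul zero_le_two]
    ring_nf
  calc ∑' k : ℕ, (2:ℝ) ^ (-((k:ℝ) + 1) * σ) * M (((k:ℤ) + 1) + s + l)
      = (r ^ 2) ^ 1 * geomTail (r ^ 2) M (l + s + (1 : ℕ)) := by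
        rw [geomTail, ← tsum_mul_left]
        refine tsum_congr fun k => ?_
        rw [hr2, ← mul_assoc, ← pow_add, ← rpow_neg_natCast_mul zero_le_two]
        push_cast
        ring_nf
    _ ≤ geomTail (r ^ 2) M (l + s) := pow_mul_geomTail_add_le hr0 hr1 hM0 hMB (l + s) 1

theorem dyadic_iteration_lemma_general (d : ℕ) (σ α₀ N₀ : ℝ)
    (hσ : 0 < σ) (hα₀ : 0 < α₀) (hN₀ : 0 < N₀)
    (M : ℤ → ℝ) (hM_nonneg : ∀ l, 0 ≤ M l) (hM_bdd : ∃ B : ℝ, ∀ l, M l ≤ B)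
    (ω : ℝ → ℝ) (hω_nonneg : ∀ t, 0 ≤ ω t)
    (hω_bdd : ∃ B : ℝ, ∀ t, ω t ≤ B)
    (hiter : ∀ (s : ℕ), 0 < s → ∀ l : ℤ,
      M l ≤ N₀ * (2:ℝ) ^ ((s:ℝ) * (d:ℝ) / 2) * ω ((2:ℝ) ^ (1 + (s:ℤ) + l))
            + N₀ * (2:ℝ) ^ (-(s:ℝ) * α₀) *
                ∑' k : ℕ, (2:ℝ) ^ (-((k:ℝ) + 1) * σ) * M (((k:ℤ) + 1) + (s:ℤ) + l)) :
    ∃ s : ℕ, 0 < s ∧ ∃ N : ℝ, 0 < N ∧ ∀ l : ℤ,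
      M l ≤ N * ∑' j : ℕ, (2:ℝ) ^ (-((j:ℝ) + 1)) *
              ∑' i : ℕ, (2:ℝ) ^ (-(i:ℝ) * σ / 2) *
                ω ((2:ℝ) ^ (i:ℤ) * (2:ℝ) ^ (1 + ((j:ℤ) + 1) * (s:ℤ) + l)) := by
  obtain ⟨B, hB⟩ := hM_bdd
  obtain ⟨C, hC⟩ := hω_bdd
  set r : ℝ := 2 ^ (-(σ / 2))
  have hr0 : 0 ≤ r := by positivity
  have hr1 : r < 1 := Real.rpow_lt_one_of_one_lt_of_neg one_lt_two (by linarith)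
  obtain ⟨s, hs, hθ⟩ := exists_pos_mul_pow_le (N₀ * (1 - r)⁻¹) (inv_pos.2 two_pos)
    (by positivity : (0:ℝ) ≤ 2 ^ (-α₀))
    (Real.rpow_lt_one_of_one_lt_of_neg one_lt_two (by linarith))
  set A : ℝ := N₀ * 2 ^ ((s:ℝ) * d / 2)
  have hA : 0 < A := by positivity
  set g : ℤ → ℝ := fun x => ω (2 ^ x)
  have hg0 : ∀ x, 0 ≤ g x := fun _ => hω_nonneg _
  have hgC : ∀ x, g x ≤ C := fun _ => hC _
  have hstep : ∀ l,
      M l ≤ A * g (l + (1 + s)) + N₀ * (2 ^ (-α₀)) ^ s * geomTail (r ^ 2) M (l + s) := fun l => by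
    refine (hiter s hs l).trans ?_
    rw [rpow_neg_natCast_mul zero_le_two, add_comm (1 + (s:ℤ))]
    gcongr
    exact tsum_two_rpow_mul_le_geomTail hσ hM_nonneg hB s l
  have hcontr := geomTail_le_add_of_le (f := fun x => A * g (x + (1 + s))) (η := 2⁻¹) hr0 hr1
    hM_nonneg hB (fun _ => mul_nonneg hA.le (hg0 _))
    (fun _ => mul_le_mul_of_nonneg_left (hgC _) hA.le) (by positivity) (by rwa [mul_right_comm]) hstep
  simp only [geomTail_const_mul_comp_add] at hcontr
  refine ⟨s, hs, 2 * A, by positivity, fun l => ?_⟩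
  calc M l ≤ geomTail r M l := le_geomTail hr0 hr1 hM_nonneg hB l
    _ ≤ ∑' j : ℕ, 2⁻¹ ^ j * (A * geomTail r g ((· + (s:ℤ))^[j] l + (1 + s))) :=
        le_tsum_pow_mul_iterate _ (by norm_num) (by norm_num) (geomTail_le hr0 hr1 hM_nonneg hB)
          (fun _ => mul_nonneg hA.le (geomTail_nonneg hr0 hg0 _))
          (fun _ => mul_le_mul_of_nonneg_left (geomTail_le hr0 hr1 hg0 hgC _) hA.le) hcontr l
    _ = _ := by
        rw [← tsum_mul_left]
        refine tsum_congr fun j => ?_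
        have hcoef : (2:ℝ) ^ (-((j:ℝ) + 1)) = 2⁻¹ ^ (j + 1) := by
          rw [show -((j:ℝ) + 1) = -((j + 1 : ℕ) : ℝ) * 1 by push_cast; ring,
            rpow_neg_natCast_mul zero_le_two, Real.rpow_neg_one]
        rw [tsum_two_rpow_mul_eq_geomTail, add_right_iterate, nsmul_eq_mul, hcoef,
          show l + j * s + (1 + s) = 1 + (j + 1) * s + l by ring]
        ring

/-- Dyadic iteration lemma underlying the Dini-continuity proof: if a bounded nonnegative
sequence `(M_l)_{l ∈ ℤ}` satisfies, for every `s ≥ 1` and `l`,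
`M_l ≤ N₀ 2^{sd/2} ω̃(2^{1+s+l}) + N₀ 2^{-sα₀} ∑_{k≥1} 2^{-kσ} M_{k+s+l}`,
with `ω̃` nonnegative increasing and bounded, then for a suitable fixed `s` one has
`M_l ≤ N ∑_{j≥1} 2^{-j} ω̃̃(2^{1+js+l})` where `ω̃̃(t) = ∑_{i≥0} 2^{-iσ/2} ω̃(2^i t)`. -/
theorem dyadic_iteration_lemma (d : ℕ) (hd : 0 < d) (σ α₀ N₀ : ℝ)
    (hσ : 0 < σ) (hα₀ : 0 < α₀) (hN₀ : 0 < N₀)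
    (M : ℤ → ℝ) (hM_nonneg : ∀ l, 0 ≤ M l) (hM_bdd : ∃ B : ℝ, ∀ l, M l ≤ B)
    (ω : ℝ → ℝ) (hω_nonneg : ∀ t, 0 ≤ ω t) (hω_mono : Monotone ω)
    (hω_bdd : ∃ B : ℝ, ∀ t, ω t ≤ B)
    (hiter : ∀ (s : ℕ), 0 < s → ∀ l : ℤ,
      M l ≤ N₀ * (2:ℝ) ^ ((s:ℝ) * (d:ℝ) / 2) * ω ((2:ℝ) ^ (1 + (s:ℤ) + l))
            + N₀ * (2:ℝ) ^ (-(s:ℝ) * α₀) *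
                ∑' k : ℕ, (2:ℝ) ^ (-((k:ℝ) + 1) * σ) * M (((k:ℤ) + 1) + (s:ℤ) + l)) :
    ∃ s : ℕ, 0 < s ∧ ∃ N : ℝ, 0 < N ∧ ∀ l : ℤ,
      M l ≤ N * ∑' j : ℕ, (2:ℝ) ^ (-((j:ℝ) + 1)) *
              ∑' i : ℕ, (2:ℝ) ^ (-(i:ℝ) * σ / 2) *
                ω ((2:ℝ) ^ (i:ℤ) * (2:ℝ) ^ (1 + ((j:ℤ) + 1) * (s:ℤ) + l)) :=
  dyadic_iteration_lemma_general d σ α₀ N₀ hσ hα₀ hN₀ M hM_nonneg hM_bdd ω hω_nonneg hω_bdd hiter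
end

section
/- Equivalence of Zygmund seminorm under difference quotients (one direction): Let α ∈ (0,1), β ∈ (0,1), and let f : ℝ^d → ℝ be bounded. For nonzero h ∈ ℝ^d define f_{β,h}(x) = |h|^{−β}(f(x+h) − f(x)). Suppose ‖f_{β,h}‖_{L^∞} ≤ K and sup_x |f_{β,h}(x+y) + f_{β,h}(x−y) − 2 f_{β,h}(x)| ≤ K |y|^α for all nonzero h, y (with α + β < 2, α + β ≠ 1 or α + β = 1 allowed). If moreover α + β < 1 or α + β ∈ (1,2), then sup_x |f(x+y) + f(x−y) − 2f(x)| ≤ N(α,β)(‖f‖_{L^∞} + K)|y|^{α+β} for all nonzero y ∈ ℝ^d; i.e. f lies in the Zygmund class of order α+β. -/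
/-!
Write `Δ_y f x = f (x + y) + f (x - y) - 2 f x`. The hypothesis on the difference quotients says
`|Δ_y f (x + h) - Δ_y f x| ≤ K ‖y‖^α ‖h‖^β`. Taking `h = ±y` in the identity
`Δ_{2y} f = 4 Δ_y f + (Δ_y f (· + y) - Δ_y f) + (Δ_y f (· - y) - Δ_y f)` gives
`|Δ_y f x| ≤ |Δ_{2y} f x| / 4 + (K / 2) ‖y‖^(α+β)`. Because `α + β < 2`, iterating this along the
dyadic scales `2ⁿ y`, starting from the trivial bound `|Δ f| ≤ 4 ‖f‖_∞`, yields
`|Δ_y f x| ≤ K ‖y‖^(α+β) / (2 (1 - 2^(α+β-2)))`.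
-/

open Filter Topology

section AddCommGroup

variable {E : Type*} [AddCommGroup E]

def secondDiff (f : E → ℝ) (x y : E) : ℝ :=
  f (x + y) + f (x - y) - 2 * f x

theorem secondDiff_const_mul (c : ℝ) (f : E → ℝ) (x y : E) :
    secondDiff (fun z => c * f z) x y = c * secondDiff f x y := by
  unfold secondDiff; ring

theorem secondDiff_sub_shift (f : E → ℝ) (h x y : E) :
    secondDiff (fun z => f (z + h) - f z) x y = secondDiff f (x + h) y - secondDiff f x y := by
  unfold secondDiff
  simp only [add_right_comm _ y h, sub_add_eq_add_sub]
  ring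

theorem abs_secondDiff_le {f : E → ℝ} {M : ℝ} (hf : ∀ x, |f x| ≤ M) (x y : E) :
    |secondDiff f x y| ≤ 4 * M := by
  have h₁ := abs_le.mp (hf (x + y))
  have h₂ := abs_le.mp (hf (x - y))
  have h₃ := abs_le.mp (hf x)
  unfold secondDiff
  rw [abs_le]
  constructor <;> linarith

theorem secondDiff_two_nsmul (f : E → ℝ) (x y : E) :
    secondDiff f x (2 • y) = 4 * secondDiff f x y
      + (secondDiff f (x + y) y - secondDiff f x y)
      + (secondDiff f (x + -y) y - secondDiff f x y) := by
  unfold secondDiff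
  rw [two_nsmul, ← add_assoc, ← sub_sub, add_sub_cancel_right, ← sub_eq_add_neg,
    sub_add_cancel]
  ring

theorem abs_secondDiff_le_of_shift {f : E → ℝ} {x y : E} {B : ℝ}
    (hshift : ∀ h ∈ ({y, -y} : Set E), |secondDiff f (x + h) y - secondDiff f x y| ≤ B) :
    |secondDiff f x y| ≤ |secondDiff f x (2 • y)| / 4 + B / 2 := by
  have h₁ := abs_le.mp (hshift y (by simp))
  have h₂ := abs_le.mp (hshift (-y) (by simp))
  have h₃ := le_abs_self (secondDiff f x (2 • y))
  have h₄ := neg_abs_le (secondDiff f x (2 • y))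
  have e := secondDiff_two_nsmul f x y
  rw [abs_le]
  constructor <;> linarith

end AddCommGroup

section Normed

variable {E : Type*} [NormedAddCommGroup E]

theorem abs_secondDiff_shift_sub_le {f : E → ℝ} {β A : ℝ} {h : E} (hh : h ≠ 0) {x y : E}
    (hq : |secondDiff (fun z => ‖h‖ ^ (-β) * (f (z + h) - f z)) x y| ≤ A) :
    |secondDiff f (x + h) y - secondDiff f x y| ≤ A * ‖h‖ ^ β := by
  have hpos : 0 < ‖h‖ ^ β := Real.rpow_pos_of_pos (norm_pos_iff.mpr hh) β
  rwa [secondDiff_const_mul, secondDiff_sub_shift, abs_mul, Real.rpow_neg (norm_nonneg h),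
    abs_of_pos (inv_pos.mpr hpos), ← div_eq_inv_mul, div_le_iff₀ hpos] at hq

/-- Unrolling `hstep` `n` times gives a geometric series in `2 ^ (s - 2)` plus the remainder
`φ (2ⁿ y) / 4ⁿ ≤ B / 4ⁿ`. -/
theorem le_mul_rpow_of_le_quarter_two_nsmul [NormedSpace ℝ E] {φ : E → ℝ} {B c s : ℝ}
    (hs : s < 2) (hc : 0 ≤ c) (hB : ∀ y, φ y ≤ B)
    (hstep : ∀ y ≠ 0, φ y ≤ φ (2 • y) / 4 + c * ‖y‖ ^ s) {y : E} (hy : y ≠ 0) :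
    φ y ≤ c / (1 - 2 ^ (s - 2)) * ‖y‖ ^ s := by
  have hdouble : ∀ y : E, ‖(2 • y : E)‖ ^ s = 4 * 2 ^ (s - 2) * ‖y‖ ^ s := fun y => by
    rw [RCLike.norm_nsmul ℝ, nsmul_eq_mul, Nat.cast_ofNat,
      Real.mul_rpow zero_le_two (norm_nonneg y), Real.rpow_sub two_pos, Real.rpow_two]
    ring
  set r : ℝ := 2 ^ (s - 2)
  have hr : r < 1 := Real.rpow_lt_one_of_one_lt_of_neg one_lt_two (by linarith)
  have hN : c / (1 - r) * r + c = c / (1 - r) := by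
    field_simp [(sub_pos.mpr hr).ne']
    ring
  have iter : ∀ n : ℕ, ∀ y ≠ 0, φ y ≤ B * 4⁻¹ ^ n + c / (1 - r) * ‖y‖ ^ s := by
    intro n
    induction n with
    | zero =>
      intro y _
      have : 0 ≤ c / (1 - r) * ‖y‖ ^ s := by
        have := sub_pos.mpr hr
        positivity
      linarith [hB y]
    | succ n ih =>
      intro y hy
      have h2y : (2 • y : E) ≠ 0 := by
        rw [← norm_pos_iff, RCLike.norm_nsmul ℝ, nsmul_eq_mul, Nat.cast_ofNat]
        exact mul_pos two_pos (norm_pos_iff.mpr hy)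
      have := ih _ h2y
      rw [hdouble] at this
      calc φ y ≤ φ (2 • y) / 4 + c * ‖y‖ ^ s := hstep y hy
        _ ≤ (B * 4⁻¹ ^ n + c / (1 - r) * (4 * r * ‖y‖ ^ s)) / 4 + c * ‖y‖ ^ s := by gcongr
        _ = B * 4⁻¹ ^ (n + 1) + (c / (1 - r) * r + c) * ‖y‖ ^ s := by ring
        _ = B * 4⁻¹ ^ (n + 1) + c / (1 - r) * ‖y‖ ^ s := by rw [hN]
  have hlim : Tendsto (fun n : ℕ => B * 4⁻¹ ^ n + c / (1 - r) * ‖y‖ ^ s) atTop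
      (𝓝 (c / (1 - r) * ‖y‖ ^ s)) := by
    have h4 : Tendsto (fun n : ℕ => (4⁻¹ : ℝ) ^ n) atTop (𝓝 0) :=
      tendsto_pow_atTop_nhds_zero_of_lt_one (by norm_num) (by norm_num)
    simpa using (h4.const_mul B).add_const (c / (1 - r) * ‖y‖ ^ s)
  exact ge_of_tendsto' hlim fun n => iter n y hy

end Normed

theorem zygmund_from_difference_quotients_general (d : ℕ) (α β : ℝ)
    (hα : α ∈ Set.Ioo (0:ℝ) 1) (hβ : β ∈ Set.Ioo (0:ℝ) 1) :
    ∃ N : ℝ, 0 < N ∧ ∀ (f : EuclideanSpace ℝ (Fin d) → ℝ) (M K : ℝ), 0 ≤ M → 0 ≤ K →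
      (∀ x, |f x| ≤ M) →
      (∀ h : EuclideanSpace ℝ (Fin d), h ≠ 0 →
        (∀ x, |‖h‖ ^ (-β) * (f (x + h) - f x)| ≤ K) ∧
        (∀ (x : EuclideanSpace ℝ (Fin d)) (y : EuclideanSpace ℝ (Fin d)), y ≠ 0 →
          |‖h‖ ^ (-β) * (f (x + y + h) - f (x + y))
            + ‖h‖ ^ (-β) * (f (x - y + h) - f (x - y))
            - 2 * (‖h‖ ^ (-β) * (f (x + h) - f x))| ≤ K * ‖y‖ ^ α)) →
      ∀ y : EuclideanSpace ℝ (Fin d), y ≠ 0 → ∀ x,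
        |f (x + y) + f (x - y) - 2 * f x| ≤ N * (M + K) * ‖y‖ ^ (α + β) := by
  have hr : 0 < 1 - (2 : ℝ) ^ (α + β - 2) :=
    sub_pos.mpr (Real.rpow_lt_one_of_one_lt_of_neg one_lt_two (by linarith [hα.2, hβ.2]))
  refine ⟨(1 - 2 ^ (α + β - 2))⁻¹ / 2, by positivity, ?_⟩
  intro f M K hM hK hf hq y hy x
  have hstep : ∀ z ≠ 0, |secondDiff f x z| ≤ |secondDiff f x (2 • z)| / 4
      + K / 2 * ‖z‖ ^ (α + β) := by
    intro z hz
    refine (abs_secondDiff_le_of_shift (B := K * ‖z‖ ^ (α + β)) fun h hh => ?_).trans_eq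
      (by ring)
    have hnorm : ‖h‖ = ‖z‖ := by rcases hh with rfl | rfl <;> simp
    have hh0 : h ≠ 0 := norm_ne_zero_iff.mp (hnorm ▸ norm_ne_zero_iff.mpr hz)
    calc |secondDiff f (x + h) z - secondDiff f x z| ≤ K * ‖z‖ ^ α * ‖h‖ ^ β :=
          abs_secondDiff_shift_sub_le hh0 ((hq h hh0).2 x z hz)
      _ = K * ‖z‖ ^ (α + β) := by
          rw [hnorm, Real.rpow_add (norm_pos_iff.mpr hz), mul_assoc]
  have hbound := le_mul_rpow_of_le_quarter_two_nsmul (by linarith [hα.2, hβ.2])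
    (by positivity) (abs_secondDiff_le hf x) hstep hy
  calc |f (x + y) + f (x - y) - 2 * f x| ≤ K / 2 / (1 - 2 ^ (α + β - 2)) * ‖y‖ ^ (α + β) :=
        hbound
    _ = (1 - 2 ^ (α + β - 2))⁻¹ / 2 * K * ‖y‖ ^ (α + β) := by ring
    _ ≤ (1 - 2 ^ (α + β - 2))⁻¹ / 2 * (M + K) * ‖y‖ ^ (α + β) := by
        gcongr
        linarith

/-- Zygmund bound from difference quotients: let `α, β ∈ (0,1)` with `α + β ≠ 1`, and let
`f` be bounded with `‖f‖_∞ ≤ M`. If for every `h ≠ 0` the difference quotient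
`f_{β,h}(x) = |h|^{-β}(f (x+h) - f x)` satisfies `‖f_{β,h}‖_∞ ≤ K` and the Zygmund-`α`
bound `|f_{β,h}(x+y) + f_{β,h}(x-y) - 2 f_{β,h}(x)| ≤ K |y|^α`, then `f` lies in the
Zygmund class of order `α + β`:
`|f (x+y) + f (x-y) - 2 f x| ≤ N(α,β) (‖f‖_∞ + K) |y|^{α+β}`. -/
theorem zygmund_from_difference_quotients (d : ℕ) (α β : ℝ)
    (hα : α ∈ Set.Ioo (0:ℝ) 1) (hβ : β ∈ Set.Ioo (0:ℝ) 1) (hne : α + β ≠ 1) :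
    ∃ N : ℝ, 0 < N ∧ ∀ (f : EuclideanSpace ℝ (Fin d) → ℝ) (M K : ℝ), 0 ≤ M → 0 ≤ K →
      (∀ x, |f x| ≤ M) →
      (∀ h : EuclideanSpace ℝ (Fin d), h ≠ 0 →
        (∀ x, |‖h‖ ^ (-β) * (f (x + h) - f x)| ≤ K) ∧
        (∀ (x : EuclideanSpace ℝ (Fin d)) (y : EuclideanSpace ℝ (Fin d)), y ≠ 0 →
          |‖h‖ ^ (-β) * (f (x + y + h) - f (x + y))
            + ‖h‖ ^ (-β) * (f (x - y + h) - f (x - y))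
            - 2 * (‖h‖ ^ (-β) * (f (x + h) - f x))| ≤ K * ‖y‖ ^ α)) →
      ∀ y : EuclideanSpace ℝ (Fin d), y ≠ 0 → ∀ x,
        |f (x + y) + f (x - y) - 2 * f x| ≤ N * (M + K) * ‖y‖ ^ (α + β) :=
  zygmund_from_difference_quotients_general d α β hα hβ
end
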